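/- arXiv:2503.15053 — 6 statements merged into one kernel-verified Lean document; each statement's English description precedes it below -/
import Mathlib

section
/- In a separating tree T on [n], if i < j < k are nodes and there is an edge directed from k to i in T, then there exists a directed path in T from i to j or a directed path from j to k. -/
open Relation Finset

/-- The undirected simple graph underlying a directed edge relation. -/
def dirGraph {α : Type*} (E : α → α → Prop) : SimpleGraph α where
  Adj a b := a ≠ b ∧ (E a b ∨ E b a)
  symm := ⟨fun a b h => ⟨h.1.symm, h.2.symm⟩⟩
  loopless := ⟨fun a h => h.1 rfl⟩

/-- `x` lies in the subtree attached to `p` at `j`: every walk from `x` to `j`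
passes through `p`. -/
def inSub {α : Type*} (E : α → α → Prop) (j p x : α) : Prop :=
  ∀ w : (dirGraph E).Walk x j, p ∈ w.support

def atMostTwo {α : Type*} (s : Set α) : Prop :=
  ∀ a ∈ s, ∀ b ∈ s, ∀ c ∈ s, a = b ∨ a = c ∨ b = c

/-- A separating tree on `[n]`, encoded by its directed edge relation
(`E a b` means there is an edge directed from `a` to `b`, i.e. `b` is a parent of `a`). -/
def IsSepTree {n : ℕ} (E : Fin n → Fin n → Prop) : Prop :=
  (dirGraph E).IsTree ∧
  (∀ j, atMostTwo {p | E j p}) ∧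
  (∀ j, atMostTwo {c | E c j}) ∧
  (∀ j p₁ p₂, E j p₁ → E j p₂ → p₁ ≠ p₂ →
    ∀ x₁ x₂, inSub E j p₁ x₁ → inSub E j p₂ x₂ →
      (x₁ < j ∧ j < x₂) ∨ (x₂ < j ∧ j < x₁)) ∧
  (∀ j c₁ c₂, E c₁ j → E c₂ j → c₁ ≠ c₂ →
    ∀ x₁ x₂, inSub E j c₁ x₁ → inSub E j c₂ x₂ →
      (x₁ < j ∧ j < x₂) ∨ (x₂ < j ∧ j < x₁))

/-!
Take the path from `i` to `j` in the tree. If it avoids `k`, prepend the edge `k → i`. Were the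
resulting path not directed, it would change direction at a node `c` with two children, one
towards `k` and `i` and one towards `j`; separation at `c` places `c` strictly between `j` and
each of `k` and `i` (or forces `c = i`), which is impossible when `i < j < k`. If the path passes
through `k`, its piece from `k` to `j` avoids `i`, and the same argument for the reversed tree,
where parents become children, shows that this piece is directed from `j` to `k`.
-/

open SimpleGraph

variable {α : Type*} {E : α → α → Prop}

section Walks

variable {G : SimpleGraph α}

lemma reflTransGen_of_forall_darts :
    ∀ {a b : α} (w : G.Walk a b), (∀ d ∈ w.darts, E d.fst d.snd) → ReflTransGen E a b
  | _, _, .nil, _ => .refl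
  | _, _, .cons _ w, hw =>
    .head (hw _ List.mem_cons_self)
      (reflTransGen_of_forall_darts w fun d hd ↦ hw d (List.mem_cons_of_mem _ hd))

lemma forall_darts_or_first_not_or_turn (P : α → α → Prop) :
    ∀ {a b : α} (w : G.Walk a b), (∀ d ∈ w.darts, P d.fst d.snd) ∨
      (∃ (c : α) (h : G.Adj a c) (q : G.Walk c b), w = .cons h q ∧ ¬ P a c) ∨
      (∃ (p c c' : α) (q₁ : G.Walk a c) (h : G.Adj c c') (q₂ : G.Walk c' b),
        w = q₁.append (.cons h q₂) ∧ p ∈ q₁.support ∧ P p c ∧ ¬ P c c')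
  | _, _, .nil => .inl (by simp)
  | a, _, .cons (v := c) h w => by
    by_cases hP : P a c
    · rcases forall_darts_or_first_not_or_turn P w with
        hall | ⟨c', h', q, rfl, hc'⟩ | ⟨p, c₁, c', q₁, h', q₂, rfl, hp, hpc, hc'⟩
      · refine .inl fun d hd ↦ ?_
        rcases List.mem_cons.mp hd with rfl | hd
        exacts [hP, hall d hd]
      · exact .inr <| .inr ⟨a, c, c', .cons h .nil, h', q, rfl, by simp, hP, hc'⟩
      · exact .inr <| .inr ⟨p, c₁, c', .cons h q₁, h', q₂, rfl, by simp [hp], hpc, hc'⟩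
    · exact .inr <| .inl ⟨c, h, w, rfl, hP⟩

end Walks

lemma dirGraph_swap (E : α → α → Prop) : dirGraph (Function.swap E) = dirGraph E := by
  ext a b
  simp only [dirGraph, or_comm]

lemma inSub_swap (E : α → α → Prop) : inSub (Function.swap E) = inSub E := by
  unfold inSub
  rw [dirGraph_swap]

lemma inSub_of_mem_support (hac : (dirGraph E).IsAcyclic) {x y p : α}
    (w : (dirGraph E).Walk x y) (hw : w.IsPath) (hp : p ∈ w.support) : inSub E y p x := by
  classical
  intro w'
  obtain rfl : w = w'.toPath :=
    congrArg Subtype.val ((hac.subsingleton_path x y).elim ⟨w, hw⟩ _)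
  exact w'.support_toPath_subset_support hp

lemma not_inSub_of_inSub (hconn : (dirGraph E).Connected) {i j k : α} (hik : i ≠ k)
    (h : inSub E j k i) : ¬ inSub E j i k := by
  classical
  intro h'
  obtain ⟨w⟩ := hconn.preconnected i j
  have hk : k ∈ w.bypass.support := h _
  have hnodup := w.bypass_isPath.support_nodup
  rw [← w.bypass.take_spec hk, Walk.support_append, List.nodup_append] at hnodup
  rcases (Walk.mem_support_iff _).mp (h' (w.bypass.dropUntil k hk)) with rfl | hi
  · exact hik rfl
  · exact hnodup.2.2 i (Walk.start_mem_support _) i hi rfl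

def SeparatesChildren [LT α] (E : α → α → Prop) : Prop :=
  ∀ j c₁ c₂, E c₁ j → E c₂ j → c₁ ≠ c₂ →
    ∀ x₁ x₂, inSub E j c₁ x₁ → inSub E j c₂ x₂ →
      (x₁ < j ∧ j < x₂) ∨ (x₂ < j ∧ j < x₁)

lemma SeparatesChildren.between_of_isPath_append [LT α] (hsep : SeparatesChildren E)
    (hac : (dirGraph E).IsAcyclic) {x c y c₁ c₂ : α} (q₁ : (dirGraph E).Walk x c)
    (q₂ : (dirGraph E).Walk c y) (hq : (q₁.append q₂).IsPath) (h₁ : c₁ ∈ q₁.support)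
    (h₂ : c₂ ∈ q₂.support.tail) (e₁ : E c₁ c) (e₂ : E c₂ c) :
    (x < c ∧ c < y) ∨ (y < c ∧ c < x) := by
  have hnodup := hq.support_nodup
  rw [Walk.support_append, List.nodup_append] at hnodup
  refine hsep c c₁ c₂ e₁ e₂ (hnodup.2.2 c₁ h₁ c₂ h₂) x y
    (inSub_of_mem_support hac q₁ hq.of_append_left h₁)
    (inSub_of_mem_support hac q₂.reverse hq.of_append_right.reverse ?_)
  rw [Walk.support_reverse, List.mem_reverse]
  exact List.mem_of_mem_tail h₂

lemma reflTransGen_of_not_inSub [Preorder α] (hac : (dirGraph E).IsAcyclic)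
    (hsep : SeparatesChildren E) {i j k : α} (hj : (i < j ∧ j < k) ∨ (k < j ∧ j < i))
    (he : E k i) (hk : ¬ inSub E j k i) : ReflTransGen E i j := by
  classical
  obtain ⟨w₀, hkw₀⟩ := not_forall.mp hk
  obtain ⟨w, hw, hkw⟩ : ∃ w : (dirGraph E).Walk i j, w.IsPath ∧ k ∉ w.support :=
    ⟨w₀.bypass, w₀.bypass_isPath, fun h ↦ hkw₀ (w₀.support_bypass_subset_support h)⟩
  have hki : (dirGraph E).Adj k i :=
    ⟨by rintro rfl; obtain ⟨_, _⟩ | ⟨_, _⟩ := hj <;> order, .inl he⟩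
  rcases forall_darts_or_first_not_or_turn E w with
    hall | ⟨c, h, q, hq, hc⟩ | ⟨p, c, c', q₁, h, q₂, hq, hp, hpc, hc'⟩
  · exact reflTransGen_of_forall_darts w hall
  · -- `i` has the two children `k` and `c`
    have := hsep.between_of_isPath_append hac (.cons hki .nil) w (hw.cons hkw) (by simp)
      (by simp [hq]) he (h.2.resolve_left hc)
    obtain ⟨_, _⟩ | ⟨_, _⟩ := hj <;> obtain ⟨_, _⟩ | ⟨_, _⟩ := this <;> order
  · -- `c` has the two children `p`, towards `i` and `k`, and `c'`, towards `j`
    rw [hq] at hw hkw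
    have hci := hsep.between_of_isPath_append hac q₁ (.cons h q₂) hw hp (by simp) hpc
      (h.2.resolve_left hc')
    have hck := hsep.between_of_isPath_append hac (.cons hki q₁) (.cons h q₂) (hw.cons hkw)
      (by simp [hp]) (by simp) hpc (h.2.resolve_left hc')
    obtain ⟨_, _⟩ | ⟨_, _⟩ := hj <;> obtain ⟨_, _⟩ | ⟨_, _⟩ := hci <;>
      obtain ⟨_, _⟩ | ⟨_, _⟩ := hck <;> order

/-- In a separating tree `T` on `[n]`, if `i < j < k` and there is an
edge directed from `k` to `i`, then there is a directed path from `i` to `j` or a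
directed path from `j` to `k`. -/
theorem stmt0 {n : ℕ} (E : Fin n → Fin n → Prop) (hT : IsSepTree E)
    (i j k : Fin n) (hij : i < j) (hjk : j < k) (he : E k i) :
    Relation.ReflTransGen E i j ∨ Relation.ReflTransGen E j k := by
  obtain ⟨htree, -, -, hsepParents, hsepChildren⟩ := hT
  by_cases hk : inSub E j k i
  · have hi : ¬ inSub (Function.swap E) j i k := by
      rw [inSub_swap]
      exact not_inSub_of_inSub htree.connected (hij.trans hjk).ne hk
    have hsep : SeparatesChildren (Function.swap E) := by
      rw [SeparatesChildren, inSub_swap]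
      exact hsepParents
    exact .inr <| reflTransGen_swap.mp <| reflTransGen_of_not_inSub
      (by rw [dirGraph_swap]; exact htree.isAcyclic) hsep (.inr ⟨hij, hjk⟩) he hi
  · exact .inl <|
      reflTransGen_of_not_inSub htree.isAcyclic hsepChildren (.inl ⟨hij, hjk⟩) he hk
end

section
/- In a separating tree T on [n], if i < j < k are nodes and there is an edge directed from i to k in T, then there exists a directed path in T from j to i or a directed path from k to j. -/
open Relation Finset

/-!
Orient the edge `{i, k}` as `e f` so that the tree path from `j` to `f` passes through `e`.
At an interior vertex of this path a change of direction would give that vertex two parents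
or two children, so it would separate `j` from both `i` and `k`, which is impossible because
`j` lies strictly between them. Hence the path is directed like the edge `i → k`: from `j`
to `i` if `e = i`, and from `k` back to `j` if `e = k`.
-/

namespace SimpleGraph

variable {V : Type*} {G : SimpleGraph V}

theorem Walk.reflTransGen_of_forall_mem_darts {r : V → V → Prop} :
    ∀ {u v : V} (w : G.Walk u v), (∀ d ∈ w.darts, r d.fst d.snd) → ReflTransGen r u v
  | _, _, nil, _ => .refl
  | _, _, cons _ p, hp =>
    .head (hp _ List.mem_cons_self)
      (reflTransGen_of_forall_mem_darts p fun d hd => hp d (List.mem_cons_of_mem _ hd))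

theorem IsAcyclic.mem_support_of_isPath [DecidableEq V] (hG : G.IsAcyclic) {u v p : V}
    {P : G.Walk u v} (hP : P.IsPath) (hp : p ∈ P.support) (w : G.Walk u v) : p ∈ w.support := by
  have hPw : (⟨P, hP⟩ : G.Path u v) = w.toPath := (hG.subsingleton_path u v).elim _ _
  exact w.support_toPath_subset_support (hPw ▸ hp)

def Dart.SameOrientation (r : V → V → Prop) (d₁ d₂ : G.Dart) : Prop :=
  (r d₁.fst d₁.snd ↔ r d₂.fst d₂.snd) ∧ (r d₁.snd d₁.fst ↔ r d₂.snd d₂.fst)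

theorem Dart.SameOrientation.trans {r : V → V → Prop} {d₁ d₂ d₃ : G.Dart}
    (h₁₂ : d₁.SameOrientation r d₂) (h₂₃ : d₂.SameOrientation r d₃) : d₁.SameOrientation r d₃ :=
  ⟨h₁₂.1.trans h₂₃.1, h₁₂.2.trans h₂₃.2⟩

end SimpleGraph

open SimpleGraph

namespace IsSepTree

variable {n : ℕ} {E : Fin n → Fin n → Prop}

/-- If the path turned at `v`, then `v` would have two parents or two children and would
separate `j` from both `e` and `f`; but `j` lies between `e` and `f`. -/
theorem sameOrientation_of_inSub (hT : IsSepTree E) {j e f a v b : Fin n}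
    (hord : e < j ∧ j < f ∨ f < j ∧ j < e) (ha : (dirGraph E).Adj a v)
    (hb : (dirGraph E).Adj v b) (hab : a ≠ b) (hj : inSub E v a j) (hf : inSub E v b f)
    (he : v = e ∨ inSub E v b e) :
    Dart.SameOrientation E ⟨(a, v), ha⟩ ⟨(v, b), hb⟩ := by
  have not_separates : ¬ ∀ x₁ x₂, inSub E v a x₁ → inSub E v b x₂ →
      (x₁ < v ∧ v < x₂) ∨ (x₂ < v ∧ v < x₁) := by
    intro hsep
    have hjf := hsep j f hj hf
    rcases he with rfl | he
    · omega
    · have hje := hsep j e hj he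
      omega
  have two_parents : ¬ (E v a ∧ E v b) := fun h =>
    not_separates (hT.2.2.2.1 v a b h.1 h.2 hab)
  have two_children : ¬ (E a v ∧ E b v) := fun h =>
    not_separates (hT.2.2.2.2 v a b h.1 h.2 hab)
  have hav := ha.2
  have hvb := hb.2
  simp only [Dart.SameOrientation]
  tauto

theorem sameOrientation_of_mem_darts_cons (hT : IsSepTree E) {j e f : Fin n}
    (hord : e < j ∧ j < f ∨ f < j ∧ j < e) (hef : (dirGraph E).Adj e f) :
    ∀ {t u : Fin n} (h : (dirGraph E).Adj t u) (S : (dirGraph E).Walk u e)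
      (R : (dirGraph E).Walk j t), ((R.concat h).append (S.concat hef)).IsPath →
      ∀ d ∈ (Walk.cons h S).darts, d.SameOrientation E ⟨(e, f), hef⟩ := by
  intro t u h S
  induction S generalizing t with
  | nil =>
    intro R hW d hd
    have htf : t ≠ f := by
      rintro rfl
      rw [Walk.concat_append] at hW
      exact ((Walk.cons_isPath_iff _ _).mp hW.of_append_right).2 (by simp)
    have hj : inSub E _ t j :=
      hT.1.2.mem_support_of_isPath hW.of_append_left (by simp)
    obtain rfl : d = ⟨(t, _), h⟩ := by simpa using hd
    exact hT.sameOrientation_of_inSub hord h hef htf hj (fun w => w.start_mem_support) (.inl rfl)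
  | @cons u b e hb S ih =>
    intro R hW d hd
    have hsuffix := hW.of_append_right
    have hrest := ih hord hef hb (R.concat h) (by rwa [Walk.concat_append, ← Walk.concat_cons])
    rcases List.mem_cons.mp hd with rfl | hd
    · have htb : t ≠ b := by
        rintro rfl
        rw [Walk.concat_append] at hW
        exact ((Walk.cons_isPath_iff _ _).mp hW.of_append_right).2 (by simp)
      have hj : inSub E u t j :=
        hT.1.2.mem_support_of_isPath hW.of_append_left (by simp)
      have hf : inSub E u b f :=
        hT.1.2.mem_support_of_isPath hsuffix.reverse (by simp)
      have he : inSub E u b e :=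
        hT.1.2.mem_support_of_isPath
          ((Walk.concat_isPath_iff _).mp hsuffix).1.reverse (by simp)
      exact (hT.sameOrientation_of_inSub hord h hb htb hj hf (.inr he)).trans
        (hrest _ List.mem_cons_self)
    · exact hrest d hd

theorem sameOrientation_of_mem_darts (hT : IsSepTree E) {j e f : Fin n}
    (hord : e < j ∧ j < f ∨ f < j ∧ j < e) (hef : (dirGraph E).Adj e f)
    (Q : (dirGraph E).Walk j e) (hQ : (Q.concat hef).IsPath) :
    ∀ d ∈ Q.darts, d.SameOrientation E ⟨(e, f), hef⟩ := by
  cases Q with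
  | nil => omega
  | cons h S => exact hT.sameOrientation_of_mem_darts_cons hord hef h S .nil hQ

end IsSepTree

/-- In a separating tree `T` on `[n]`, if `i < j < k` and there is an
edge directed from `i` to `k`, then there is a directed path from `j` to `i` or a
directed path from `k` to `j`. -/
theorem stmt1 {n : ℕ} (E : Fin n → Fin n → Prop) (hT : IsSepTree E)
    (i j k : Fin n) (hij : i < j) (hjk : j < k) (he : E i k) :
    Relation.ReflTransGen E j i ∨ Relation.ReflTransGen E k j := by
  have hik : (dirGraph E).Adj i k := ⟨(hij.trans hjk).ne, .inl he⟩
  obtain ⟨P, hP, -⟩ := hT.1.existsUnique_path j i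
  by_cases hk : k ∈ P.support
  · have hiQ := Walk.endpoint_notMem_support_takeUntil hP hk hik.ne
    have hQ := (hP.takeUntil hk).concat hiQ hik.symm
    have hsame := hT.sameOrientation_of_mem_darts (.inr ⟨hij, hjk⟩) hik.symm _ hQ
    exact .inr <| reflTransGen_swap.mp <|
      Walk.reflTransGen_of_forall_mem_darts _ fun d hd => (hsame d hd).2.mpr he
  · have hsame := hT.sameOrientation_of_mem_darts (.inl ⟨hij, hjk⟩) hik P (hP.concat hk hik)
    exact .inl <| Walk.reflTransGen_of_forall_mem_darts P fun d hd => (hsame d hd).1.mpr he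
end

section
/- Let T be a separating tree on [n] and let j be a node of T with two ancestor subtrees L and R satisfying L < R (every element of L is less than every element of R). Set M = max(L) and m = min(R). Then for every k with M < k < m, there is a directed path in T from k to j. -/
open Relation Finset

/-! Let `P` be the tree path from `k` to `j`. It avoids both parents `p₁`, `p₂`, since a vertex
of either ancestor subtree lies outside `(M, m)`. Hence at each inner vertex `u` of `P`, `k` lies
in the subtree through the previous vertex and `M`, `m` lie in the subtree through the next one.
If both of these neighbours were parents of `u`, separation would put `u` strictly between `k`
and `M` and strictly between `k` and `m`, impossible for `M < k < m`. So the edge entering `u`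
along `P` is directed forward as soon as the edge leaving it is; the last edge, into `j`, is
forward because `j` has no third parent. -/

namespace SimpleGraph

variable {V : Type*} {G : SimpleGraph V}

theorem IsAcyclic.support_subset_of_isPath (hG : G.IsAcyclic) {u v : V} {p : G.Walk u v}
    (hp : p.IsPath) (w : G.Walk u v) : p.support ⊆ w.support := by
  classical
  have hbypass : w.bypass = p :=
    congrArg Subtype.val ((hG.subsingleton_path u v).elim ⟨_, w.bypass_isPath⟩ ⟨p, hp⟩)
  exact hbypass ▸ w.support_bypass_subset_support

theorem IsAcyclic.mem_support_of_forall_mem_support_of_adj (hG : G.IsAcyclic) {x a u c : V}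
    (hau : G.Adj a u) (huc : G.Adj u c) (hac : a ≠ c) (hx : ∀ w : G.Walk x u, a ∈ w.support)
    (w : G.Walk x c) : u ∈ w.support := by
  classical
  have ha : a ∈ w.support := by
    have := hx (w.concat huc.symm)
    rw [Walk.support_concat, List.mem_append, List.mem_singleton] at this
    exact this.resolve_right hau.ne
  have hpath : (Walk.cons hau (Walk.cons huc Walk.nil)).IsPath := by
    simp [hac, hau.ne, huc.ne]
  exact w.support_dropUntil_subset_support ha
    (hG.support_subset_of_isPath hpath _ (by simp))

theorem IsAcyclic.forall_mem_support_of_isPath_cons (hG : G.IsAcyclic) {x p j : V}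
    (hpj : G.Adj p j) (hx : ∀ w : G.Walk x j, p ∈ w.support) :
    ∀ {u c : V} (huc : G.Adj u c) (S : G.Walk c j), (Walk.cons huc S).IsPath →
      p ∉ (Walk.cons huc S).support → ∀ w : G.Walk x u, c ∈ w.support := by
  intro u c huc S
  induction S generalizing u with
  | nil =>
    intro _ hp
    exact hG.mem_support_of_forall_mem_support_of_adj hpj huc.symm
      (fun h => hp (by simp [h])) hx
  | @cons _ d _ hcd S ih =>
    intro hpath hp
    have hdu : d ≠ u := by
      rintro rfl
      exact ((Walk.cons_isPath_iff _ _).mp hpath).2 (by simp)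
    exact hG.mem_support_of_forall_mem_support_of_adj hcd.symm huc.symm hdu
      (ih hpj hx hcd hpath.of_cons (fun h => hp (List.mem_cons_of_mem _ h)))

end SimpleGraph

open SimpleGraph

namespace IsSepTree

variable {n : ℕ} {E : Fin n → Fin n → Prop}

theorem notMem_Ioo_of_parents (hT : IsSepTree E) {u a c k M m : Fin n} (hua : E u a)
    (huc : E u c) (hac : a ≠ c) (hk : inSub E u a k) (hM : inSub E u c M)
    (hm : inSub E u c m) : k ∉ Set.Ioo M m := by
  rintro ⟨hMk, hkm⟩
  rcases hT.2.2.2.1 u a c hua huc hac k M hk hM with h | h <;>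
    rcases hT.2.2.2.1 u a c hua huc hac k m hk hm with h' | h' <;> order

theorem rel_and_reflTransGen_of_isPath (hT : IsSepTree E) {j p₁ p₂ M m k : Fin n}
    (hp₁ : E j p₁) (hp₂ : E j p₂) (hne : p₁ ≠ p₂) (hM : inSub E j p₁ M) (hm : inSub E j p₂ m)
    (hk : k ∈ Set.Ioo M m) :
    ∀ {a u : Fin n} (hau : (dirGraph E).Adj a u) (P : (dirGraph E).Walk u j),
      (Walk.cons hau P).IsPath → p₁ ∉ (Walk.cons hau P).support →
      p₂ ∉ (Walk.cons hau P).support → inSub E u a k → E a u ∧ ReflTransGen E u j := by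
  intro a u hau P
  induction P generalizing a with
  | nil =>
    intro _ h₁ h₂ _
    refine ⟨hau.2.resolve_right fun hja => ?_, .refl⟩
    rcases hT.2.1 _ a hja p₁ hp₁ p₂ hp₂ with rfl | rfl | h
    · exact h₁ (by simp)
    · exact h₂ (by simp)
    · exact hne h
  | @cons u c j huc S ih =>
    intro hpath h₁ h₂ hka
    have hG := hT.1.isAcyclic
    have hac : a ≠ c := by
      rintro rfl
      exact ((Walk.cons_isPath_iff _ _).mp hpath).2 (by simp)
    have hkc : inSub E c u k := hG.mem_support_of_forall_mem_support_of_adj hau huc hac hka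
    obtain ⟨huc', hcj⟩ := ih hp₁ hp₂ hM hm huc hpath.of_cons (h₁ <| List.mem_cons_of_mem _ ·)
      (h₂ <| List.mem_cons_of_mem _ ·) hkc
    have hside {p x : Fin n} (hp : E j p) (hpS : p ∉ (Walk.cons hau (Walk.cons huc S)).support)
        (hx : inSub E j p x) : inSub E u c x := by
      have hpS' : p ∉ (Walk.cons huc S).support := (hpS <| List.mem_cons_of_mem _ ·)
      have hpj : (dirGraph E).Adj p j :=
        ⟨fun h => hpS' (h ▸ (Walk.cons huc S).end_mem_support), Or.inr hp⟩
      exact hG.forall_mem_support_of_isPath_cons hpj hx huc S hpath.of_cons hpS'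
    refine ⟨hau.2.resolve_right fun hua => ?_, .head huc' hcj⟩
    exact hT.notMem_Ioo_of_parents hua huc' hac hka (hside hp₁ h₁ hM) (hside hp₂ h₂ hm) hk

end IsSepTree

theorem stmt2_general {n : ℕ} (E : Fin n → Fin n → Prop) (hT : IsSepTree E)
    (j p₁ p₂ : Fin n) (hp₁ : E j p₁) (hp₂ : E j p₂) (hne : p₁ ≠ p₂)
    (M m : Fin n)
    (hM : inSub E j p₁ M) (hMmax : ∀ x, inSub E j p₁ x → x ≤ M)
    (hm : inSub E j p₂ m) (hmmin : ∀ x, inSub E j p₂ x → m ≤ x) :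
    ∀ k, M < k → k < m → Relation.ReflTransGen E k j := by
  intro k hMk hkm
  have hG := hT.1.isAcyclic
  obtain ⟨w⟩ := hT.1.connected.preconnected k j
  have hsub {p : Fin n} (hp : p ∈ w.bypass.support) : inSub E j p k :=
    fun v => hG.support_subset_of_isPath w.bypass_isPath v hp
  obtain ⟨P, hP, h₁, h₂⟩ :
      ∃ P : (dirGraph E).Walk k j, P.IsPath ∧ p₁ ∉ P.support ∧ p₂ ∉ P.support :=
    ⟨w.bypass, w.bypass_isPath, fun h => (hMmax k (hsub h)).not_gt hMk,
      fun h => (hmmin k (hsub h)).not_gt hkm⟩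
  cases P with
  | nil => exact .refl
  | cons hkc P =>
    obtain ⟨hkc', hcj⟩ := hT.rel_and_reflTransGen_of_isPath hp₁ hp₂ hne hM hm ⟨hMk, hkm⟩
      hkc P hP h₁ h₂ fun v => v.start_mem_support
    exact .head hkc' hcj

/-- Let `j` be a node of a separating tree with two ancestor subtrees
`L` (attached to the parent `p₁`) and `R` (attached to the parent `p₂`) with `L < R`,
`M = max L` and `m = min R`. Then for every `k` with `M < k < m` there is a directed
path from `k` to `j`. -/
theorem stmt2 {n : ℕ} (E : Fin n → Fin n → Prop) (hT : IsSepTree E)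
    (j p₁ p₂ : Fin n) (hp₁ : E j p₁) (hp₂ : E j p₂) (hne : p₁ ≠ p₂)
    (M m : Fin n)
    (hM : inSub E j p₁ M) (hMmax : ∀ x, inSub E j p₁ x → x ≤ M)
    (hm : inSub E j p₂ m) (hmmin : ∀ x, inSub E j p₂ x → m ≤ x)
    (hLR : ∀ x y, inSub E j p₁ x → inSub E j p₂ y → x < y) :
    ∀ k, M < k → k < m → Relation.ReflTransGen E k j :=
  stmt2_general E hT j p₁ p₂ hp₁ hp₂ hne M m hM hMmax hm hmmin
end

section
/- The set of simple congruences of the weak order on S_n is closed under meet in the congruence lattice: if ≡ and ≡' are simple congruences then ≡ ∧ ≡' is a simple congruence. Consequently, the simple congruences form a lattice under refinement. -/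
/-- An arc `(a, b, A, B)` on `[n]`: endpoints `a < b` and a partition
`A ⊔ B` of the open interval `]a, b[`. -/
structure Arc (n : ℕ) where
  a : Fin n
  b : Fin n
  A : Finset (Fin n)
  B : Finset (Fin n)
  hab : a < b
  hdisj : Disjoint A B
  hunion : A ∪ B = Finset.Ioo a b

/-- `Subarc α β` : `α` is a subarc of `β`. -/
def Subarc {n : ℕ} (α β : Arc n) : Prop :=
  β.a ≤ α.a ∧ α.b ≤ β.b ∧ α.A ⊆ β.A ∧ α.B ⊆ β.B

/-- An arc ideal: a lower set for the subarc order. -/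
def IsArcIdeal {n : ℕ} (I : Set (Arc n)) : Prop :=
  ∀ α β : Arc n, Subarc α β → β ∈ I → α ∈ I

/-- An ideal is essential when it contains all basic arcs `(i, i+1, ∅, ∅)`. -/
def EssentialIdeal {n : ℕ} (I : Set (Arc n)) : Prop :=
  ∀ α : Arc n, (α.b : ℕ) = (α.a : ℕ) + 1 → α ∈ I

/-- `α` is a subarc-minimal arc of the complement of `I`. -/
def MinNonArc {n : ℕ} (I : Set (Arc n)) (α : Arc n) : Prop :=
  α ∉ I ∧ ∀ β : Arc n, Subarc β α → β ∉ I → β = α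

/-- An ideal is simple when all subarc-minimal arcs of its complement are
up arcs (`B = ∅`) or down arcs (`A = ∅`). -/
def SimpleIdeal {n : ℕ} (I : Set (Arc n)) : Prop :=
  ∀ α : Arc n, MinNonArc I α → α.B = ∅ ∨ α.A = ∅

theorem MinNonArc.of_subset {n : ℕ} {I J : Set (Arc n)} {α : Arc n}
    (h : MinNonArc J α) (hJI : J ⊆ I) (hα : α ∉ I) : MinNonArc I α :=
  ⟨hα, fun β hβα hβ => h.2 β hβα (fun hβJ => hβ (hJI hβJ))⟩

theorem stmt4_general {n : ℕ} (I I' : Set (Arc n))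
    (hs : SimpleIdeal I) (hs' : SimpleIdeal I') :
    SimpleIdeal (I ∩ I') := by
  intro α hα
  by_cases hαI : α ∈ I
  · exact hs' α (hα.of_subset Set.inter_subset_right fun hαI' => hα.1 ⟨hαI, hαI'⟩)
  · exact hs α (hα.of_subset Set.inter_subset_left hαI)

/-- the meet of two simple congruences of the weak order is simple
(congruences correspond to arc ideals, and meet corresponds to intersection of
arc ideals); consequently the simple congruences form a lattice under refinement. -/
theorem stmt4 {n : ℕ} (I I' : Set (Arc n))
    (hI : IsArcIdeal I) (hI' : IsArcIdeal I')
    (hs : SimpleIdeal I) (hs' : SimpleIdeal I') :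
    SimpleIdeal (I ∩ I') :=
  stmt4_general I I' hs hs'
end

section
/- The number of simple essential congruences of the weak order on S_n equals C_{n-1}^2, the square of the (n-1)-st Catalan number. -/
open Finset

/-!
The subarc-minimal non-members of a simple essential arc ideal are up or down arcs spanning at
least two steps, and the ideal consists of the arcs containing none of them. Conversely every
upward-closed family of such intervals is realised on each side, independently for the two sides,
because an up arc contains no down arc of length at least 2 and vice versa. So the ideals
correspond to pairs of upward-closed families of long intervals. Such a family is encoded by the
number `t i ≤ i` of left endpoints it has over the right endpoint `i + 1`, a monotone sequence;
cutting a monotone sequence with `t i ≤ i` at its last fixed point gives the Catalan recursion.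
-/

abbrev MonoSubdiag (m : ℕ) : Type := {t : Fin m → ℕ // Monotone t ∧ ∀ i, t i ≤ i}

namespace MonoSubdiag

variable {m : ℕ}

instance : Finite (MonoSubdiag m) :=
  Finite.of_injective (fun t i => (⟨t.1 i, (t.2.2 i).trans_lt i.isLt⟩ : Fin m))
    fun _ _ h => Subtype.ext <| funext fun i => congrArg Fin.val (congrFun h i)

def glueFun (j : Fin (m + 1)) (p : MonoSubdiag j) (s : MonoSubdiag (m - j)) (i : Fin (m + 1)) : ℕ :=
  if h : (i : ℕ) < j then p.1 ⟨i, h⟩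
  else if h' : (i : ℕ) = j then j
  else s.1 ⟨i - j - 1, by omega⟩ + j

section glueFun

variable {j : Fin (m + 1)} {p : MonoSubdiag j} {s : MonoSubdiag (m - j)} {i : Fin (m + 1)}

lemma glueFun_of_lt (h : (i : ℕ) < j) : glueFun j p s i = p.1 ⟨i, h⟩ := dif_pos h

lemma glueFun_self (h : (i : ℕ) = j) : glueFun j p s i = j := by
  rw [glueFun, dif_neg h.not_lt, dif_pos h]

lemma glueFun_of_gt (h : (j : ℕ) < i) :
    glueFun j p s i = s.1 ⟨i - j - 1, by omega⟩ + j := by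
  rw [glueFun, dif_neg (by omega), dif_neg (by omega)]

lemma glueFun_le_self : glueFun j p s i ≤ i := by
  rcases lt_trichotomy (i : ℕ) j with h | h | h
  · rw [glueFun_of_lt h]; exact p.2.2 _
  · rw [glueFun_self h, h]
  · rw [glueFun_of_gt h]; have := s.2.2 ⟨i - j - 1, by omega⟩; dsimp at this; omega

lemma glueFun_lt_self (h : (j : ℕ) < i) : glueFun j p s i < i := by
  rw [glueFun_of_gt h]; have := s.2.2 ⟨i - j - 1, by omega⟩; dsimp at this; omega

end glueFun

lemma monotone_glueFun (j : Fin (m + 1)) (p : MonoSubdiag j) (s : MonoSubdiag (m - j)) :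
    Monotone (glueFun j p s) := by
  intro i i' (hii' : (i : ℕ) ≤ i')
  have below : ∀ k : Fin (m + 1), (k : ℕ) ≤ j → glueFun j p s k ≤ j :=
    fun k hk => glueFun_le_self.trans hk
  have above : ∀ k : Fin (m + 1), (j : ℕ) ≤ k → j ≤ glueFun j p s k := by
    intro k hk
    rcases hk.eq_or_lt with h | h
    · rw [glueFun_self h.symm]
    · rw [glueFun_of_gt h]; omega
  by_cases hi' : (i' : ℕ) < j
  · rw [glueFun_of_lt hi', glueFun_of_lt (hii'.trans_lt hi')]
    exact p.2.1 (Fin.mk_le_mk.mpr hii')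
  by_cases hi : (j : ℕ) < i
  · rw [glueFun_of_gt hi, glueFun_of_gt (hi.trans_le hii')]
    have := s.2.1 (show (⟨i - j - 1, by omega⟩ : Fin (m - j)) ≤ ⟨i' - j - 1, by omega⟩ from
      Fin.mk_le_mk.mpr (by omega))
    omega
  · exact (below i (by omega)).trans (above i' (by omega))

def glue (m : ℕ) (x : Σ j : Fin (m + 1), MonoSubdiag j × MonoSubdiag (m - j)) :
    MonoSubdiag (m + 1) :=
  ⟨glueFun x.1 x.2.1 x.2.2, monotone_glueFun _ _ _, fun _ => glueFun_le_self⟩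

lemma glue_injective (m : ℕ) : Function.Injective (glue m) := by
  rintro ⟨j, p, s⟩ ⟨j', p', s'⟩ h
  replace h : glueFun j p s = glueFun j' p' s' := congrArg Subtype.val h
  -- `j` is the last fixed point of `glueFun j p s`
  obtain rfl : j = j' := by
    by_contra hne
    rcases lt_or_gt_of_ne (Fin.val_ne_of_ne hne) with hlt | hlt
    · have := glueFun_lt_self (p := p) (s := s) (i := j') hlt
      rw [h, glueFun_self rfl] at this
      exact this.false
    · have := glueFun_lt_self (p := p') (s := s') (i := j) hlt
      rw [← h, glueFun_self rfl] at this
      exact this.false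
  obtain rfl : p = p' := Subtype.ext <| funext fun i => by
    have := congrFun h (Fin.castLE (by omega) i)
    rwa [glueFun_of_lt i.isLt, glueFun_of_lt i.isLt] at this
  obtain rfl : s = s' := Subtype.ext <| funext fun k => by
    have := congrFun h ⟨j + 1 + k, by omega⟩
    rw [glueFun_of_gt (by dsimp; omega), glueFun_of_gt (by dsimp; omega)] at this
    simpa only [show (j : ℕ) + 1 + k - j - 1 = k by omega, Fin.eta, add_left_inj] using this
  rfl

lemma exists_last_fixedPoint (t : MonoSubdiag (m + 1)) :
    ∃ j : Fin (m + 1), t.1 j = j ∧ ∀ i : Fin (m + 1), j < i → t.1 i < i := by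
  classical
  let S : Finset (Fin (m + 1)) := {i | t.1 i = i}
  have hS : S.Nonempty := ⟨0, by simpa [S] using Nat.le_zero.mp (t.2.2 0)⟩
  refine ⟨S.max' hS, by simpa [S] using S.max'_mem hS, fun i hi => ?_⟩
  refine (t.2.2 i).lt_of_ne fun hfix => ?_
  exact (S.le_max' i (by simpa [S] using hfix)).not_gt hi

lemma glue_surjective (m : ℕ) : Function.Surjective (glue m) := by
  intro t
  obtain ⟨j, hj, hlast⟩ := exists_last_fixedPoint t
  have ht_ge : ∀ i : Fin (m + 1), j ≤ i → j ≤ t.1 i := fun i hi => hj ▸ t.2.1 hi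
  let p : MonoSubdiag j :=
    ⟨fun i => t.1 (Fin.castLE (by omega) i),
      t.2.1.comp (Fin.strictMono_castLE (by omega : (j : ℕ) ≤ m + 1)).monotone,
      fun i => t.2.2 _⟩
  let s : MonoSubdiag (m - j) :=
    ⟨fun k => t.1 ⟨j + 1 + k, by omega⟩ - j,
      fun k k' hkk' => Nat.sub_le_sub_right (t.2.1 (Fin.mk_le_mk.mpr (by
        have : (k : ℕ) ≤ k' := hkk'; omega))) _,
      fun k => by
        have := hlast ⟨j + 1 + k, by omega⟩ (Fin.lt_def.mpr (by dsimp; omega))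
        dsimp at this ⊢; omega⟩
  refine ⟨⟨j, p, s⟩, Subtype.ext <| funext fun i => ?_⟩
  show glueFun j p s i = t.1 i
  rcases lt_trichotomy (i : ℕ) j with h | h | h
  · rw [glueFun_of_lt h]; rfl
  · rw [glueFun_self h, ← hj, Fin.ext h]
  · rw [glueFun_of_gt h]
    have hidx : (⟨j + 1 + (i - j - 1), by omega⟩ : Fin (m + 1)) = i := Fin.ext (by dsimp; omega)
    have := ht_ge i (Fin.le_def.mpr h.le)
    dsimp [s]; rw [hidx]; omega

end MonoSubdiag

open MonoSubdiag in
lemma card_monoSubdiag (m : ℕ) : Nat.card (MonoSubdiag m) = catalan m := by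
  induction m using Nat.strong_induction_on with
  | _ m ih =>
    cases m with
    | zero =>
      rw [catalan_zero, Nat.card_eq_one_iff_exists]
      exact ⟨⟨finZeroElim, fun i => i.elim0, fun i => i.elim0⟩,
        fun t => Subtype.ext (funext fun i => i.elim0)⟩
    | succ m =>
      rw [← Nat.card_congr (Equiv.ofBijective _ ⟨glue_injective m, glue_surjective m⟩),
        Nat.card_sigma, catalan_succ]
      refine Finset.sum_congr rfl fun j _ => ?_
      rw [Nat.card_prod, ih j (by omega), ih (m - j) (by omega)]

lemma Fin.mem_iff_val_lt_card_of_isLowerSet {n : ℕ} {s : Finset (Fin n)}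
    (hs : IsLowerSet (s : Set (Fin n))) (a : Fin n) : a ∈ s ↔ (a : ℕ) < #s := by
  constructor
  · intro ha
    have : Iic a ⊆ s := fun x hx => hs (Finset.mem_Iic.mp hx) ha
    simpa using card_le_card this
  · intro ha
    by_contra hna
    have : s ⊆ Iio a := fun x hx => Finset.mem_Iio.mpr <| lt_of_not_ge fun hax => hna (hs hax hx)
    have := card_le_card this
    rw [Fin.card_Iio] at this
    omega

/-- The upward closures of the antichains of subarc-minimal forbidden up (or down) arcs, the
interval `[a, b]` being the pair `(a, b)`. -/
def IsLongUpperFamily {n : ℕ} (F : Set (Fin n × Fin n)) : Prop :=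
  (∀ q ∈ F, (q.1 : ℕ) + 2 ≤ q.2) ∧ ∀ q ∈ F, ∀ q' : Fin n × Fin n, q'.1 ≤ q.1 → q.2 ≤ q'.2 → q' ∈ F

section fibreCard

open Classical

variable {n : ℕ} {F : Set (Fin n × Fin n)}

noncomputable def fibreCard (F : Set (Fin n × Fin n)) (b : Fin n) : ℕ :=
  #{a : Fin n | (a, b) ∈ F}

lemma IsLongUpperFamily.mem_iff_lt_fibreCard (hF : IsLongUpperFamily F) (a b : Fin n) :
    (a, b) ∈ F ↔ (a : ℕ) < fibreCard F b := by
  refine Iff.trans ?_ (Fin.mem_iff_val_lt_card_of_isLowerSet (fun a' a h ha => ?_) a)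
  · simp
  · simp only [coe_filter, mem_univ, true_and, Set.mem_ofPred_eq] at ha ⊢
    exact hF.2 _ ha _ h le_rfl

lemma IsLongUpperFamily.monotone_fibreCard (hF : IsLongUpperFamily F) : Monotone (fibreCard F) :=
  fun b b' hbb' => card_le_card fun a ha => by
    simp only [mem_filter, mem_univ, true_and] at ha ⊢
    exact hF.2 _ ha (a, b') le_rfl hbb'

lemma IsLongUpperFamily.fibreCard_le (hF : IsLongUpperFamily F) (b : Fin n) :
    fibreCard F b ≤ b - 1 := by
  calc fibreCard F b ≤ #{a : Fin n | (a : ℕ) < b - 1} := card_le_card fun a ha => by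
        simp only [mem_filter, mem_univ, true_and] at ha ⊢
        have := hF.1 _ ha
        dsimp at this; omega
    _ ≤ b - 1 := by rw [Fin.card_filter_val_lt]; exact min_le_right _ _

end fibreCard

namespace MonoSubdiag

variable {n : ℕ}

def toFamily (t : MonoSubdiag (n - 1)) : Set (Fin n × Fin n) :=
  {q | ∃ i : Fin (n - 1), (q.2 : ℕ) = i + 1 ∧ (q.1 : ℕ) < t.1 i}

lemma isLongUpperFamily_toFamily (t : MonoSubdiag (n - 1)) : IsLongUpperFamily (toFamily t) := by
  constructor
  · rintro q ⟨i, hi, hq⟩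
    have := t.2.2 i
    omega
  · rintro q ⟨i, hi, hq⟩ q' (h1 : (q'.1 : ℕ) ≤ q.1) (h2 : (q.2 : ℕ) ≤ q'.2)
    have := t.2.1 (show i ≤ ⟨q'.2 - 1, by omega⟩ from Fin.mk_le_mk.mpr (by omega))
    exact ⟨⟨q'.2 - 1, by omega⟩, by dsimp; omega, by omega⟩

noncomputable def ofFamily {F : Set (Fin n × Fin n)} (hF : IsLongUpperFamily F) :
    MonoSubdiag (n - 1) :=
  ⟨fun i => fibreCard F ⟨i + 1, by omega⟩,
    fun _ _ hii' => hF.monotone_fibreCard (Fin.mk_le_mk.mpr (by simpa using hii')),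
    fun i => hF.fibreCard_le _⟩

lemma mem_toFamily_ofFamily {F : Set (Fin n × Fin n)} (hF : IsLongUpperFamily F)
    (q : Fin n × Fin n) : q ∈ toFamily (ofFamily hF) ↔ q ∈ F := by
  constructor
  · rintro ⟨i, hi, hq⟩
    have := (hF.mem_iff_lt_fibreCard q.1 ⟨i + 1, by omega⟩).mpr hq
    rwa [show (⟨i + 1, _⟩ : Fin n) = q.2 from Fin.ext hi.symm] at this
  · intro hq
    have := hF.1 q hq
    refine ⟨⟨q.2 - 1, by omega⟩, by dsimp; omega, ?_⟩
    convert (hF.mem_iff_lt_fibreCard q.1 q.2).mp hq using 2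
    exact congrArg (fibreCard F) (Fin.ext (by dsimp; omega))

lemma ofFamily_toFamily (t : MonoSubdiag (n - 1)) :
    ofFamily (isLongUpperFamily_toFamily t) = t := by
  classical
  refine Subtype.ext <| funext fun i => ?_
  have := t.2.2 i
  calc fibreCard (toFamily t) ⟨i + 1, by omega⟩ = #{a : Fin n | (a : ℕ) < t.1 i} := by
        refine congrArg card (filter_congr fun a _ => ⟨?_, fun ha => ⟨i, rfl, ha⟩⟩)
        rintro ⟨i', hi', ha⟩
        obtain rfl : i = i' := Fin.ext (by dsimp at hi'; omega)
        exact ha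
    _ = t.1 i := by rw [Fin.card_filter_val_lt]; omega

end MonoSubdiag

noncomputable def familyEquiv (n : ℕ) :
    MonoSubdiag (n - 1) ≃ {F : Set (Fin n × Fin n) // IsLongUpperFamily F} where
  toFun t := ⟨t.toFamily, t.isLongUpperFamily_toFamily⟩
  invFun F := MonoSubdiag.ofFamily F.2
  left_inv := MonoSubdiag.ofFamily_toFamily
  right_inv F := Subtype.ext <| Set.ext <| MonoSubdiag.mem_toFamily_ofFamily F.2

lemma card_isLongUpperFamily (n : ℕ) :
    Nat.card {F : Set (Fin n × Fin n) // IsLongUpperFamily F} = catalan (n - 1) := by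
  rw [← Nat.card_congr (familyEquiv n), card_monoSubdiag]

attribute [ext] Arc

namespace Arc

variable {n : ℕ}

def side (α : Arc n) : Bool → Finset (Fin n)
  | true => α.A
  | false => α.B

/-- `pure true` is the up arc and `pure false` the down arc from `a` to `b`. -/
def pure (s : Bool) (a b : Fin n) (h : a < b) : Arc n where
  a := a
  b := b
  A := if s then Ioo a b else ∅
  B := if s then ∅ else Ioo a b
  hab := h
  hdisj := by cases s <;> simp
  hunion := by cases s <;> simp

lemma side_pure (s s' : Bool) (a b : Fin n) (h : a < b) :
    (pure s a b h).side s' = if s' = s then Ioo a b else ∅ := by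
  cases s <;> cases s' <;> rfl

lemma eq_pure_of_side_eq_empty {α : Arc n} {s : Bool} (h : α.side (!s) = ∅) :
    α = pure s α.a α.b α.hab := by
  have := α.hunion
  cases s <;> simp only [side] at h <;> ext1 <;> simp_all [pure]

end Arc

section Subarc

variable {n : ℕ} {α β γ : Arc n}

lemma Subarc.refl (α : Arc n) : Subarc α α :=
  ⟨le_rfl, le_rfl, subset_rfl, subset_rfl⟩

lemma Subarc.trans (h₁ : Subarc α β) (h₂ : Subarc β γ) : Subarc α γ :=
  ⟨h₂.1.trans h₁.1, h₁.2.1.trans h₂.2.1, h₁.2.2.1.trans h₂.2.2.1, h₁.2.2.2.trans h₂.2.2.2⟩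

lemma Subarc.side_subset (h : Subarc α β) : ∀ s, α.side s ⊆ β.side s
  | true => h.2.2.1
  | false => h.2.2.2

lemma Subarc.eq_of_a_eq_of_b_eq (h : Subarc α β) (ha : α.a = β.a) (hb : α.b = β.b) : α = β := by
  have hα := α.hunion
  have hβ := β.hunion
  have hdisj := Finset.disjoint_left.mp β.hdisj
  rw [ha, hb] at hα
  have hA := h.2.2.1
  have hB := h.2.2.2
  ext1
  · exact ha
  · exact hb
  · refine hA.antisymm fun x hx => ?_
    have : x ∈ α.A ∪ α.B := hα ▸ hβ ▸ mem_union_left _ hx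
    grind
  · refine hB.antisymm fun x hx => ?_
    have : x ∈ α.A ∪ α.B := hα ▸ hβ ▸ mem_union_right _ hx
    grind

lemma Arc.pure_subarc_pure {s : Bool} {a b a' b' : Fin n} (h : a < b) (h' : a' < b')
    (ha : a' ≤ a) (hb : b ≤ b') : Subarc (Arc.pure s a b h) (Arc.pure s a' b' h') := by
  cases s <;> exact ⟨ha, hb, by simp [Arc.pure, Ioo_subset_Ioo ha hb], by simp [Arc.pure, Ioo_subset_Ioo ha hb]⟩

end Subarc

section Ideals

variable {n : ℕ} {I : Set (Arc n)}

lemma exists_subarc_minNonArc {α : Arc n} (hα : α ∉ I) : ∃ β, Subarc β α ∧ MinNonArc I β := by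
  obtain ⟨β, ⟨hβα, hβ⟩, hmin⟩ := (measure fun β : Arc n => (β.b : ℕ) - β.a).wf.has_min
    {β | Subarc β α ∧ β ∉ I} ⟨α, Subarc.refl α, hα⟩
  refine ⟨β, hβα, hβ, fun γ hγβ hγ => ?_⟩
  have hlen : ¬ (γ.b : ℕ) - γ.a < (β.b : ℕ) - β.a := hmin γ ⟨hγβ.trans hβα, hγ⟩
  have : (γ.a : ℕ) < γ.b := γ.hab
  have : (β.a : ℕ) ≤ γ.a := hγβ.1
  have : (γ.b : ℕ) ≤ β.b := hγβ.2.1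
  exact hγβ.eq_of_a_eq_of_b_eq (Fin.ext (by omega)) (Fin.ext (by omega))

def forbiddenFamily (I : Set (Arc n)) (s : Bool) : Set (Fin n × Fin n) :=
  {q | ∃ h : q.1 < q.2, (q.1 : ℕ) + 2 ≤ q.2 ∧ Arc.pure s q.1 q.2 h ∉ I}

def idealOfFamilies (F : Bool → Set (Fin n × Fin n)) : Set (Arc n) :=
  {α | ∀ s, ∀ q ∈ F s, ∀ h : q.1 < q.2, ¬ Subarc (Arc.pure s q.1 q.2 h) α}

lemma isArcIdeal_idealOfFamilies (F : Bool → Set (Fin n × Fin n)) :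
    IsArcIdeal (idealOfFamilies F) :=
  fun _ _ hαβ hβ s q hq h hq' => hβ s q hq h (hq'.trans hαβ)

lemma essentialIdeal_idealOfFamilies {F : Bool → Set (Fin n × Fin n)}
    (hF : ∀ s, IsLongUpperFamily (F s)) : EssentialIdeal (idealOfFamilies F) := by
  intro α hα s q hq h hsub
  have := (hF s).1 q hq
  have : (α.a : ℕ) ≤ q.1 := hsub.1
  have : (q.2 : ℕ) ≤ α.b := hsub.2.1
  omega

lemma simpleIdeal_idealOfFamilies (F : Bool → Set (Fin n × Fin n)) :
    SimpleIdeal (idealOfFamilies F) := by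
  intro α ⟨hα, hmin⟩
  simp only [idealOfFamilies, Set.mem_ofPred_eq, not_forall, not_not] at hα
  obtain ⟨s, q, hq, h, hsub⟩ := hα
  have hpure : Arc.pure s q.1 q.2 h = α :=
    hmin _ hsub fun hmem => hmem s q hq h (Subarc.refl _)
  subst hpure
  cases s <;> simp [Arc.pure]

lemma isLongUpperFamily_forbiddenFamily (hI : IsArcIdeal I) (s : Bool) :
    IsLongUpperFamily (forbiddenFamily I s) := by
  refine ⟨fun q hq => hq.2.1, ?_⟩
  rintro q ⟨h, hlong, hq⟩ q' (h1 : q'.1 ≤ q.1) (h2 : q.2 ≤ q'.2)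
  have h' : q'.1 < q'.2 := h1.trans_lt (h.trans_le h2)
  refine ⟨h', ?_, fun hq' => hq (hI _ _ (Arc.pure_subarc_pure h h' h1 h2) hq')⟩
  have : (q'.1 : ℕ) ≤ q.1 := h1
  have : (q.2 : ℕ) ≤ q'.2 := h2
  omega

lemma forbiddenFamily_idealOfFamilies {F : Bool → Set (Fin n × Fin n)}
    (hF : ∀ s, IsLongUpperFamily (F s)) (s : Bool) :
    forbiddenFamily (idealOfFamilies F) s = F s := by
  ext q
  constructor
  · rintro ⟨h, -, hq⟩
    simp only [idealOfFamilies, Set.mem_ofPred_eq, not_forall, not_not] at hq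
    obtain ⟨s', q', hq', h', hsub⟩ := hq
    obtain rfl | hs := eq_or_ne s' s
    · exact (hF s').2 q' hq' q hsub.1 hsub.2.1
    · -- a pure arc has nothing on its other side, while `]q'.1, q'.2[` is nonempty
      have hlong := (hF s').1 q' hq'
      have hsides := hsub.side_subset s'
      rw [Arc.side_pure, Arc.side_pure, if_pos rfl, if_neg hs] at hsides
      have hmem : (⟨q'.1 + 1, by omega⟩ : Fin n) ∈ Ioo q'.1 q'.2 := by
        simp only [Finset.mem_Ioo, Fin.lt_def]; omega
      exact absurd (hsides hmem) (Finset.notMem_empty _)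
  · intro hq
    have hlong := (hF s).1 q hq
    exact ⟨Fin.lt_def.mpr (by omega), hlong, fun hmem => hmem s q hq _ (Subarc.refl _)⟩

lemma MinNonArc.exists_eq_pure (hess : EssentialIdeal I) (hsimple : SimpleIdeal I) {β : Arc n}
    (hβ : MinNonArc I β) : (β.a : ℕ) + 2 ≤ β.b ∧ ∃ s, β = Arc.pure s β.a β.b β.hab := by
  refine ⟨?_, ?_⟩
  · have := Fin.lt_def.mp β.hab
    by_contra hshort
    exact hβ.1 (hess β (by omega))
  · rcases hsimple β hβ with hB | hA
    · exact ⟨true, Arc.eq_pure_of_side_eq_empty hB⟩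
    · exact ⟨false, Arc.eq_pure_of_side_eq_empty hA⟩

lemma idealOfFamilies_forbiddenFamily (hI : IsArcIdeal I) (hess : EssentialIdeal I)
    (hsimple : SimpleIdeal I) : idealOfFamilies (forbiddenFamily I) = I := by
  ext α
  constructor
  · intro hα
    by_contra hαI
    obtain ⟨β, hβα, hβ⟩ := exists_subarc_minNonArc hαI
    obtain ⟨hlong, s, hβeq⟩ := hβ.exists_eq_pure hess hsimple
    exact hα s (β.a, β.b) ⟨β.hab, hlong, hβeq ▸ hβ.1⟩ β.hab (hβeq ▸ hβα)
  · rintro hα s q ⟨h, -, hq⟩ _ hsub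
    exact hq (hI _ _ hsub hα)

end Ideals

noncomputable def simpleEssentialEquiv (n : ℕ) :
    {I : Set (Arc n) // IsArcIdeal I ∧ EssentialIdeal I ∧ SimpleIdeal I} ≃
      (Bool → {F : Set (Fin n × Fin n) // IsLongUpperFamily F}) where
  toFun I s := ⟨forbiddenFamily I.1 s, isLongUpperFamily_forbiddenFamily I.2.1 s⟩
  invFun F := ⟨idealOfFamilies fun s => (F s).1, isArcIdeal_idealOfFamilies _,
    essentialIdeal_idealOfFamilies fun s => (F s).2, simpleIdeal_idealOfFamilies _⟩
  left_inv I := Subtype.ext (idealOfFamilies_forbiddenFamily I.2.1 I.2.2.1 I.2.2.2)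
  right_inv F := funext fun s => Subtype.ext
    (forbiddenFamily_idealOfFamilies (fun s => (F s).2) s)

theorem stmt5_general {n : ℕ} :
    Nat.card {I : Set (Arc n) // IsArcIdeal I ∧ EssentialIdeal I ∧ SimpleIdeal I} =
      catalan (n - 1) ^ 2 := by
  rw [Nat.card_congr (simpleEssentialEquiv n), Nat.card_fun, card_isLongUpperFamily,
    Nat.card_eq_fintype_card, Fintype.card_bool]

/-- the number of simple essential congruences of the weak order on
`S_n` (equivalently, of simple essential arc ideals on `[n]`) is the square of the
`(n-1)`-st Catalan number. -/
theorem stmt5 {n : ℕ} (hn : 1 ≤ n) :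
    Nat.card {I : Set (Arc n) // IsArcIdeal I ∧ EssentialIdeal I ∧ SimpleIdeal I} =
      catalan (n - 1) ^ 2 :=
  stmt5_general
end

section
/- If two ≡-admissible separating trees T and T' (for the same essential lattice congruence ≡ of the weak order on S_n) have a common linear extension, then T = T'. -/
open Relation Finset

/-- A mandatory arc of a separating tree `E`: one arc per edge of the tree between
`α.a < α.b`, where `A` (resp. `B`) records the intermediate values admitting a
directed path to the edge (resp. from the edge). -/
def MandatoryArc {n : ℕ} (E : Fin n → Fin n → Prop) (α : Arc n) : Prop :=
  (E α.a α.b ∨ E α.b α.a) ∧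
  ∀ j : Fin n, α.a < j → j < α.b →
    ((j ∈ α.A ↔ (Relation.ReflTransGen E j α.a ∨ Relation.ReflTransGen E j α.b)) ∧
     (j ∈ α.B ↔ (Relation.ReflTransGen E α.a j ∨ Relation.ReflTransGen E α.b j)))

/-- A forbidden up arc of a separating tree `E`: the up arc `u(M, m)` where
`M = max L`, `m = min R` for two ancestor subtrees `L < R` of a node `j`. -/
def ForbiddenUpArc {n : ℕ} (E : Fin n → Fin n → Prop) (α : Arc n) : Prop :=
  α.B = ∅ ∧ ∃ j p₁ p₂ : Fin n, E j p₁ ∧ E j p₂ ∧ p₁ ≠ p₂ ∧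
    inSub E j p₁ α.a ∧ (∀ x, inSub E j p₁ x → x ≤ α.a) ∧
    inSub E j p₂ α.b ∧ (∀ x, inSub E j p₂ x → α.b ≤ x)

/-- A forbidden down arc of a separating tree `E`: the down arc `d(M, m)` where
`M = max L`, `m = min R` for two descendant subtrees `L < R` of a node `j`. -/
def ForbiddenDownArc {n : ℕ} (E : Fin n → Fin n → Prop) (α : Arc n) : Prop :=
  α.A = ∅ ∧ ∃ j c₁ c₂ : Fin n, E c₁ j ∧ E c₂ j ∧ c₁ ≠ c₂ ∧
    inSub E j c₁ α.a ∧ (∀ x, inSub E j c₁ x → x ≤ α.a) ∧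
    inSub E j c₂ α.b ∧ (∀ x, inSub E j c₂ x → α.b ≤ x)

/-- A separating tree is `I`-admissible when the arc ideal `I` contains all its
mandatory arcs and none of its forbidden arcs. -/
def AdmissibleTree {n : ℕ} (I : Set (Arc n)) (E : Fin n → Fin n → Prop) : Prop :=
  IsSepTree E ∧
  (∀ α : Arc n, MandatoryArc E α → α ∈ I) ∧
  (∀ α : Arc n, ForbiddenUpArc E α ∨ ForbiddenDownArc E α → α ∉ I)

/-- `σ` is a linear extension of the directed tree `E`: `σ p` is the value at
position `p`, and each directed edge goes from an earlier to a later value. -/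
def IsLinExt {n : ℕ} (E : Fin n → Fin n → Prop) (σ : Equiv.Perm (Fin n)) : Prop :=
  ∀ a b : Fin n, E a b → σ.symm a < σ.symm b

/-!
Order the vertices by the common linear extension `σ` and let `j` be the first vertex whose
children differ in `E` and `F`; we show that every `E`-child `c` of `j` is an `F`-child. Follow the
path of the tree `F` from `c` to `j`. If it turns at a peak or a valley `z`, the branches at `z`
containing `c` and `j` give a forbidden arc of `F` spanning the gap between them, and the
separation properties of both trees make this arc a subarc of the mandatory arc of the `E`-edge
`c — j`; since the ideal is closed under subarcs, this contradicts the admissibility of `F`.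
Hence `c` climbs to `j` in `F` through a child `c'` of `j`; symmetrically `c'` climbs to `j` in `E`
through a child `d`, and the `E`-children `c` and `d` of `j` are comparable, hence equal, which
forces `c' = c`.
-/

open SimpleGraph

section Graph

variable {α : Type*} {E : α → α → Prop}

def ReachableAvoiding (E : α → α → Prop) (p x y : α) : Prop :=
  ∃ w : (dirGraph E).Walk x y, p ∉ w.support

@[simp]
lemma not_reachableAvoiding {p x z : α} : ¬ ReachableAvoiding E p x z ↔ inSub E z p x := by
  simp [ReachableAvoiding, inSub]

lemma ReachableAvoiding.trans {p x y z : α} (h₁ : ReachableAvoiding E p x y)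
    (h₂ : ReachableAvoiding E p y z) : ReachableAvoiding E p x z := by
  obtain ⟨w₁, h₁⟩ := h₁
  obtain ⟨w₂, h₂⟩ := h₂
  exact ⟨w₁.append w₂, by simp [Walk.mem_support_append_iff, h₁, h₂]⟩

lemma ReachableAvoiding.symm {p x y : α} (h : ReachableAvoiding E p x y) :
    ReachableAvoiding E p y x := by
  obtain ⟨w, h⟩ := h
  exact ⟨w.reverse, by simpa using h⟩

lemma reachableAvoiding_of_adj {p x y : α} (h : (dirGraph E).Adj x y) (hx : p ≠ x) (hy : p ≠ y) :
    ReachableAvoiding E p x y :=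
  ⟨h.toWalk, by simp [hx, hy]⟩

lemma inSub_self (E : α → α → Prop) (z p : α) : inSub E z p p :=
  fun w => w.start_mem_support

lemma eq_of_inSub_self {z q : α} (h : inSub E z q z) : q = z := by
  simpa using h .nil

lemma inSub_trans {z p y x : α} (hy : inSub E z y x) (hp : inSub E z p y) : inSub E z p x := by
  classical
  intro w
  exact w.support_dropUntil_subset_support (hy w) (hp _)

lemma reachableAvoiding_of_reflTransGen {p x y : α} (h : ReflTransGen E x y)
    (hp : ReflTransGen E x p → ¬ ReflTransGen E p y) : ReachableAvoiding E p x y := by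
  induction h with
  | refl =>
    refine ⟨.nil, ?_⟩
    rintro hpx
    obtain rfl : p = x := by simpa using hpx
    exact hp .refl .refl
  | @tail b c hxb hbc ih =>
    obtain ⟨w, hw⟩ := ih fun hxp hpb => hp hxp (hpb.tail hbc)
    by_cases hbc' : b = c
    · exact hbc' ▸ ⟨w, hw⟩
    refine ⟨w.concat (show (dirGraph E).Adj b c from ⟨hbc', .inl hbc⟩), ?_⟩
    simp only [Walk.support_concat, List.mem_append, hw, List.mem_singleton, false_or]
    rintro rfl
    exact hp (hxb.tail hbc) .refl

end Graph

section Tree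

variable {α : Type*} {E : α → α → Prop}

lemma inSub_iff_mem_support (htree : (dirGraph E).IsTree) {p x z : α}
    {P : (dirGraph E).Walk x z} (hP : P.IsPath) : inSub E z p x ↔ p ∈ P.support := by
  classical
  refine ⟨fun h => h P, fun h w => ?_⟩
  have : w.toPath = (⟨P, hP⟩ : (dirGraph E).Path x z) :=
    (htree.isAcyclic.subsingleton_path x z).elim _ _
  exact w.support_toPath_subset_support (by rw [this]; exact h)

lemma inSub_of_reachableAvoiding (htree : (dirGraph E).IsTree) {p z x : α}
    (h : (dirGraph E).Adj p z) (hx : ReachableAvoiding E z x p) : inSub E z p x := by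
  classical
  obtain ⟨w, hw⟩ := hx
  have hz : z ∉ w.toPath.val.support := fun hz => hw (w.support_toPath_subset_support hz)
  rw [inSub_iff_mem_support htree (w.toPath.property.concat hz h)]
  simp

lemma reachableAvoiding_of_inSub {p z x : α} (hxz : (dirGraph E).Reachable x z)
    (h : inSub E z p x) (hpz : p ≠ z) : ReachableAvoiding E z x p := by
  classical
  obtain ⟨w⟩ := hxz
  have hp := h w.toPath
  exact ⟨w.toPath.val.takeUntil p hp,
    Walk.endpoint_notMem_support_takeUntil w.toPath.property hp hpz.symm⟩

lemma inSub_of_inSub_of_reachableAvoiding (htree : (dirGraph E).IsTree) {p z c x : α}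
    (h : (dirGraph E).Adj p z) (hc : inSub E z p c) (hx : ReachableAvoiding E z x c) :
    inSub E z p x :=
  inSub_of_reachableAvoiding htree h
    (hx.trans (reachableAvoiding_of_inSub (htree.connected c z) hc h.ne))

lemma eq_of_inSub_of_inSub (htree : (dirGraph E).IsTree) {q₁ q₂ z x : α}
    (h₁ : (dirGraph E).Adj q₁ z) (h₂ : (dirGraph E).Adj q₂ z)
    (hx₁ : inSub E z q₁ x) (hx₂ : inSub E z q₂ x) : q₁ = q₂ := by
  classical
  by_contra hne
  obtain ⟨P, hP, -⟩ := htree.existsUnique_path x z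
  have hq₁ : q₁ ∈ P.support := hx₁ P
  by_cases hq₂ : q₂ ∈ (P.takeUntil q₁ hq₁).support
  · refine (Walk.notMem_support_takeUntil_support_takeUntil_subset (Ne.symm hne) hq₁ hq₂) ?_
    have := hx₁ ((P.takeUntil q₂ (P.support_takeUntil_subset_support hq₁ hq₂)).concat h₂)
    simpa [Walk.support_concat, h₁.ne] using this
  · have := hx₂ ((P.takeUntil q₁ hq₁).concat h₁)
    simp [Walk.support_concat, h₂.ne, hq₂] at this

lemma exists_adj_inSub (htree : (dirGraph E).IsTree) {x z : α} (hxz : x ≠ z) :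
    ∃ q, (dirGraph E).Adj q z ∧ inSub E z q x := by
  obtain ⟨P, hP, -⟩ := htree.existsUnique_path x z
  have hnil : ¬ P.Nil := Walk.not_nil_of_ne hxz
  exact ⟨P.penultimate, P.adj_penultimate hnil,
    (inSub_iff_mem_support htree hP).2 (P.getVert_mem_support _)⟩

lemma not_reachableAvoiding_of_inSub (htree : (dirGraph E).IsTree) {n₁ n₂ z x y : α}
    (h₁ : (dirGraph E).Adj n₁ z) (h₂ : (dirGraph E).Adj n₂ z) (hne : n₁ ≠ n₂)
    (hx : inSub E z n₁ x) (hy : inSub E z n₂ y) : ¬ ReachableAvoiding E z y x :=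
  fun hyx => hne <|
    eq_of_inSub_of_inSub htree h₁ h₂ (inSub_of_inSub_of_reachableAvoiding htree h₁ hx hyx) hy

end Tree

section Flip

variable {α : Type*} {E : α → α → Prop}

lemma dirGraph_flip : dirGraph (flip E) = dirGraph E := by
  ext a b
  simp [dirGraph, flip, or_comm]

lemma inSub_flip : inSub (flip E) = inSub E := by
  unfold inSub
  rw [dirGraph_flip]

lemma reachableAvoiding_flip : ReachableAvoiding (flip E) = ReachableAvoiding E := by
  unfold ReachableAvoiding
  rw [dirGraph_flip]

lemma reflTransGen_flip {x y : α} : ReflTransGen (flip E) x y ↔ ReflTransGen E y x :=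
  reflTransGen_swap

end Flip

section Turns

variable {α : Type*} {E : α → α → Prop}

/-- `IsPeak E c j z` and `IsValley E c j z`: the tree path from `c` to `j` is monotone up to its
first turn `z`, where it enters through the neighbour `n₁` and leaves through `n₂`, both children
of `z` (a peak) or both parents of `z` (a valley). -/
def IsPeak (E : α → α → Prop) (c j z : α) : Prop :=
  ReflTransGen E c z ∧ ∃ n₁ n₂, E n₁ z ∧ E n₂ z ∧ n₁ ≠ n₂ ∧ inSub E z n₁ c ∧ inSub E z n₂ j

def IsValley (E : α → α → Prop) (c j z : α) : Prop :=
  ReflTransGen E z c ∧ ∃ n₁ n₂, E z n₁ ∧ E z n₂ ∧ n₁ ≠ n₂ ∧ inSub E z n₁ c ∧ inSub E z n₂ j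

lemma isPeak_flip {c j z : α} : IsPeak (flip E) c j z ↔ IsValley E c j z := by
  simp only [IsPeak, IsValley, inSub_flip, reflTransGen_flip]
  rfl

lemma isValley_flip {c j z : α} : IsValley (flip E) c j z ↔ IsPeak E c j z := by
  simp only [IsPeak, IsValley, inSub_flip, reflTransGen_flip]
  rfl

end Turns

section LinExt

variable {n : ℕ} {E : Fin n → Fin n → Prop} {σ : Equiv.Perm (Fin n)}

lemma IsLinExt.le_of_reflTransGen (hσ : IsLinExt E σ) {x y : Fin n} (h : ReflTransGen E x y) :
    σ.symm x ≤ σ.symm y := by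
  induction h with
  | refl => exact le_rfl
  | tail _ hbc ih => exact ih.trans (hσ _ _ hbc).le

lemma IsLinExt.eq_of_reflTransGen (hσ : IsLinExt E σ) {x y : Fin n} (h₁ : ReflTransGen E x y)
    (h₂ : ReflTransGen E y x) : x = y :=
  σ.symm.injective ((hσ.le_of_reflTransGen h₁).antisymm (hσ.le_of_reflTransGen h₂))

lemma IsLinExt.not_reflTransGen (hσ : IsLinExt E σ) {x y : Fin n} (h : E x y) :
    ¬ ReflTransGen E y x :=
  fun h' => (hσ _ _ h).not_ge (hσ.le_of_reflTransGen h')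

lemma IsLinExt.ne (hσ : IsLinExt E σ) {x y : Fin n} (h : E x y) : x ≠ y :=
  fun hxy => hσ.not_reflTransGen h (hxy ▸ .refl)

lemma IsLinExt.adj (hσ : IsLinExt E σ) {x y : Fin n} (h : E x y) : (dirGraph E).Adj x y :=
  ⟨hσ.ne h, .inl h⟩

lemma IsLinExt.flip (hσ : IsLinExt E σ) : IsLinExt (flip E) (Fin.revPerm.trans σ) :=
  fun _ _ h => by simpa using hσ _ _ h

lemma inSub_parent_of_reflTransGen (htree : (dirGraph E).IsTree) (hσ : IsLinExt E σ)
    {z p t : Fin n} (hp : E z p) (ht : ReflTransGen E p t) : inSub E z p t :=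
  inSub_of_reachableAvoiding htree (hσ.adj hp).symm
    (reachableAvoiding_of_reflTransGen ht fun hpz _ => hσ.not_reflTransGen hp hpz).symm

lemma inSub_child_of_reflTransGen (htree : (dirGraph E).IsTree) (hσ : IsLinExt E σ)
    {z c t : Fin n} (hc : E c z) (ht : ReflTransGen E t c) : inSub E z c t :=
  inSub_of_reachableAvoiding htree (hσ.adj hc)
    (reachableAvoiding_of_reflTransGen ht fun _ hzc => hσ.not_reflTransGen hc hzc)

lemma eq_of_rel_of_reflTransGen (htree : (dirGraph E).IsTree) (hσ : IsLinExt E σ)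
    {c d j : Fin n} (hc : E c j) (hd : E d j) (hcd : ReflTransGen E c d) : c = d :=
  eq_of_inSub_of_inSub htree (hσ.adj hc) (hσ.adj hd) (inSub_self E j c)
    (inSub_child_of_reflTransGen htree hσ hd hcd)

end LinExt

def SeparatedAt {n : ℕ} (E : Fin n → Fin n → Prop) (z p₁ p₂ : Fin n) : Prop :=
  ∀ x₁ x₂, inSub E z p₁ x₁ → inSub E z p₂ x₂ → (x₁ < z ∧ z < x₂) ∨ (x₂ < z ∧ z < x₁)

section Separated

variable {n : ℕ} {E : Fin n → Fin n → Prop}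

lemma IsSepTree.separatedAt_parents (hsep : IsSepTree E) {z p₁ p₂ : Fin n} (h₁ : E z p₁)
    (h₂ : E z p₂) (hne : p₁ ≠ p₂) : SeparatedAt E z p₁ p₂ :=
  hsep.2.2.2.1 z p₁ p₂ h₁ h₂ hne

lemma IsSepTree.separatedAt_children (hsep : IsSepTree E) {z c₁ c₂ : Fin n} (h₁ : E c₁ z)
    (h₂ : E c₂ z) (hne : c₁ ≠ c₂) : SeparatedAt E z c₁ c₂ :=
  hsep.2.2.2.2 z c₁ c₂ h₁ h₂ hne

lemma IsSepTree.eq_or_eq_of_rel (hsep : IsSepTree E) {z p₁ p₂ p : Fin n} (h₁ : E z p₁)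
    (h₂ : E z p₂) (hne : p₁ ≠ p₂) (hp : E z p) : p = p₁ ∨ p = p₂ := by
  rcases hsep.2.1 z p₁ h₁ p₂ h₂ p hp with h | h | h
  exacts [absurd h hne, .inl h.symm, .inr h.symm]

lemma SeparatedAt.not_between {z p₁ p₂ x y y' : Fin n} (hs : SeparatedAt E z p₁ p₂)
    (hx : inSub E z p₁ x) (hy : inSub E z p₂ y) (hy' : inSub E z p₂ y') : ¬ (y < x ∧ x < y') := by
  rcases hs x y hx hy with h | h <;> rcases hs x y' hx hy' with h' | h' <;> order

lemma SeparatedAt.exists_gap {z p₁ p₂ x₁ x₂ : Fin n} (hs : SeparatedAt E z p₁ p₂)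
    (h₁ : inSub E z p₁ x₁) (h₂ : inSub E z p₂ x₂) (hlt : x₁ < x₂) :
    ∃ M m, x₁ ≤ M ∧ m ≤ x₂ ∧ M < m ∧
      IsGreatest {x | inSub E z p₁ x} M ∧ IsLeast {x | inSub E z p₂ x} m := by
  obtain ⟨M, hM, hMmax⟩ := Set.exists_max_image _ id (Set.toFinite {x | inSub E z p₁ x}) ⟨x₁, h₁⟩
  obtain ⟨m, hm, hmmin⟩ := Set.exists_min_image _ id (Set.toFinite {x | inSub E z p₂ x}) ⟨x₂, h₂⟩
  refine ⟨M, m, hMmax x₁ h₁, hmmin x₂ h₂, ?_, ⟨hM, hMmax⟩, ⟨hm, hmmin⟩⟩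
  rcases hs x₁ x₂ h₁ h₂ with h | h <;> rcases hs M x₂ hM h₂ with h' | h' <;>
    rcases hs x₁ m h₁ hm with h'' | h'' <;> order

end Separated

section Shape

variable {n : ℕ} {E : Fin n → Fin n → Prop} {σ : Equiv.Perm (Fin n)}

lemma reflTransGen_or_isPeak_or_isValley_cons (htree : (dirGraph E).IsTree) (hσ : IsLinExt E σ)
    {c v j : Fin n}
    (h : (dirGraph E).Adj c v) (hc : ReachableAvoiding E c v j)
    (ih : ReflTransGen E v j ∨ ∃ z, IsPeak E v j z) :
    ReflTransGen E c j ∨ ReflTransGen E j c ∨ (∃ z, IsPeak E c j z) ∨ ∃ z, IsValley E c j z := by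
  have valley : ∀ p, E v c → E v p → p ≠ c → inSub E v p j → IsValley E c j v :=
    fun p hvc hvp hpc hj => ⟨.single hvc, c, p, hvc, hvp, hpc.symm, inSub_self E v c, hj⟩
  rcases ih with hvj | ⟨z, hvz, n₁, n₂, hn₁, hn₂, hne, hv, hj⟩
  · rcases h.2 with hcv | hvc
    · exact .inl (.head hcv hvj)
    rcases hvj.cases_head with rfl | ⟨p, hvp, hpj⟩
    · exact .inr (.inl (.single hvc))
    by_cases hpc : p = c
    · exact .inl (hpc ▸ hpj)
    · exact .inr (.inr (.inr
        ⟨v, valley p hvc hvp hpc (inSub_parent_of_reflTransGen htree hσ hvp hpj)⟩))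
  have hjz : ReachableAvoiding E v j z := by
    by_contra hjz
    rw [not_reachableAvoiding] at hjz
    exact hne (eq_of_inSub_of_inSub htree (hσ.adj hn₁) (hσ.adj hn₂) (inSub_trans hjz hv) hj)
  have hzv : z ≠ v := by
    rintro rfl
    exact hσ.ne hn₁ (eq_of_inSub_self hv)
  have hzc : z ≠ c := by
    rintro rfl
    exact not_reachableAvoiding.2 (inSub_of_reachableAvoiding htree h.symm hc.symm) hjz
  have hcz : ReflTransGen E c z ∨ IsValley E c j v := by
    rcases h.2 with hcv | hvc
    · exact .inl (.head hcv hvz)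
    rcases hvz.cases_head with rfl | ⟨p, hvp, hpz⟩
    · exact absurd rfl hzv
    by_cases hpc : p = c
    · exact .inl (hpc ▸ hpz)
    · exact .inr (valley p hvc hvp hpc (inSub_of_inSub_of_reachableAvoiding htree
        (hσ.adj hvp).symm (inSub_parent_of_reflTransGen htree hσ hvp hpz) hjz))
  rcases hcz with hcz | hval
  · exact .inr (.inr (.inl ⟨z, hcz, n₁, n₂, hn₁, hn₂, hne, inSub_of_inSub_of_reachableAvoiding
      htree (hσ.adj hn₁) hv (reachableAvoiding_of_adj h hzc hzv), hj⟩))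
  · exact .inr (.inr (.inr ⟨v, hval⟩))

theorem reflTransGen_or_isPeak_or_isValley (htree : (dirGraph E).IsTree) (hσ : IsLinExt E σ)
    {c j : Fin n} (hcj : c ≠ j) :
    ReflTransGen E c j ∨ ReflTransGen E j c ∨ (∃ z, IsPeak E c j z) ∨ ∃ z, IsValley E c j z := by
  obtain ⟨P, hP, -⟩ := htree.existsUnique_path c j
  induction P with
  | nil => exact absurd rfl hcj
  | @cons c v j h P' ih =>
    obtain ⟨hP', hc⟩ := (Walk.cons_isPath_iff _ _).1 hP
    by_cases hvj : v = j
    · subst hvj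
      rcases h.2 with h | h
      exacts [.inl (.single h), .inr (.inl (.single h))]
    have step := reflTransGen_or_isPeak_or_isValley_cons htree hσ h ⟨P', hc⟩
    -- reversing all edges swaps the two chains and swaps peaks with valleys
    have step_flip := reflTransGen_or_isPeak_or_isValley_cons (E := flip E)
      (by rwa [dirGraph_flip]) hσ.flip (by rwa [dirGraph_flip])
      (by rw [reachableAvoiding_flip]; exact ⟨P', hc⟩)
    simp only [reflTransGen_flip, isPeak_flip, isValley_flip] at step_flip
    rcases ih hvj hP' with h' | h' | h' | h'
    · exact step (.inl h')
    · rcases step_flip (.inl h') with h | h | h | h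
      exacts [.inr (.inl h), .inl h, .inr (.inr (.inr h)), .inr (.inr (.inl h))]
    · exact step (.inr h')
    · rcases step_flip (.inr h') with h | h | h | h
      exacts [.inr (.inl h), .inl h, .inr (.inr (.inr h)), .inr (.inr (.inl h))]

end Shape

section Edge

variable {n : ℕ} {E : Fin n → Fin n → Prop} {σ : Equiv.Perm (Fin n)}

/-- If the tree path from `x` to the endpoint `t` of the edge `t' — t` avoids `t'` and turns at
`z`, then `t` and `t'` both lie in the branch at `z` not containing `x`. -/
lemma false_of_turn (htree : (dirGraph E).IsTree) {z n₁ n₂ x t t' : Fin n}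
    (h₁ : (dirGraph E).Adj n₁ z) (h₂ : (dirGraph E).Adj n₂ z) (hne : n₁ ≠ n₂)
    (hs : SeparatedAt E z n₁ n₂) (hx : inSub E z n₁ x) (ht : inSub E z n₂ t)
    (htt' : (dirGraph E).Adj t' t) (hxt : ReachableAvoiding E t' x t)
    (hbetween : t < x ∧ x < t' ∨ t' < x ∧ x < t) : False := by
  have hzt : z ≠ t := by
    rintro rfl
    exact h₂.ne (eq_of_inSub_self ht)
  have hzt' : z ≠ t' := by
    rintro rfl
    exact not_reachableAvoiding_of_inSub htree h₁ h₂ hne hx ht hxt.symm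
  have ht' : inSub E z n₂ t' :=
    inSub_of_inSub_of_reachableAvoiding htree h₂ ht (reachableAvoiding_of_adj htt' hzt' hzt)
  rcases hbetween with hb | hb
  exacts [hs.not_between hx ht ht' hb, hs.not_between hx ht' ht hb]

lemma IsSepTree.reflTransGen_or_of_between (hsep : IsSepTree E) (hσ : IsLinExt E σ)
    {a b x : Fin n} (hab : (dirGraph E).Adj a b) (hx : a < x ∧ x < b ∨ b < x ∧ x < a) :
    (ReflTransGen E x a ∨ ReflTransGen E x b) ∨ (ReflTransGen E a x ∨ ReflTransGen E b x) := by
  have htree := hsep.1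
  obtain ⟨t, t', ht, htt', hxt⟩ : ∃ t t', (t = a ∧ t' = b ∨ t = b ∧ t' = a) ∧
      (dirGraph E).Adj t' t ∧ ReachableAvoiding E t' x t := by
    by_cases h : ReachableAvoiding E b x a
    · exact ⟨a, b, .inl ⟨rfl, rfl⟩, hab.symm, h⟩
    · exact ⟨b, a, .inr ⟨rfl, rfl⟩, hab, reachableAvoiding_of_inSub (htree.connected x a)
        (not_reachableAvoiding.1 h) hab.ne.symm⟩
  have hbetween : t < x ∧ x < t' ∨ t' < x ∧ x < t := by
    rcases ht with ⟨rfl, rfl⟩ | ⟨rfl, rfl⟩ <;> tauto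
  have hxt' : x ≠ t := by
    rintro rfl
    rcases hbetween with h | h <;> order
  rcases reflTransGen_or_isPeak_or_isValley htree hσ hxt' with
    h | h | ⟨z, -, n₁, n₂, h₁, h₂, hne, hx', ht'⟩ | ⟨z, -, n₁, n₂, h₁, h₂, hne, hx', ht'⟩
  · rcases ht with ⟨rfl, -⟩ | ⟨rfl, -⟩ <;> tauto
  · rcases ht with ⟨rfl, -⟩ | ⟨rfl, -⟩ <;> tauto
  · exact (false_of_turn htree (hσ.adj h₁) (hσ.adj h₂) hne (hsep.separatedAt_children h₁ h₂ hne)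
      hx' ht' htt' hxt hbetween).elim
  · exact (false_of_turn htree (hσ.adj h₁).symm (hσ.adj h₂).symm hne
      (hsep.separatedAt_parents h₁ h₂ hne) hx' ht' htt' hxt hbetween).elim

lemma not_reflTransGen_and_reflTransGen (htree : (dirGraph E).IsTree) (hσ : IsLinExt E σ)
    {a b x : Fin n} (hab : (dirGraph E).Adj a b) (hxa : x ≠ a) (hxb : x ≠ b)
    (h₁ : ReflTransGen E x a ∨ ReflTransGen E x b) (h₂ : ReflTransGen E a x ∨ ReflTransGen E b x) :
    False := by
  have key : ∀ {u v}, (dirGraph E).Adj u v → ReflTransGen E x u → ReflTransGen E v x →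
      x ≠ u → x ≠ v → False := by
    intro u v huv hxu hvx hxu' hxv'
    have hu : ReachableAvoiding E v x u := reachableAvoiding_of_reflTransGen hxu
      fun hxv _ => hxv' (hσ.eq_of_reflTransGen hxv hvx)
    have hv : ReachableAvoiding E u v x := reachableAvoiding_of_reflTransGen hvx
      fun _ hux => hxu' (hσ.eq_of_reflTransGen hxu hux)
    exact not_reachableAvoiding.2 (inSub_of_reachableAvoiding htree huv hu) hv.symm
  rcases h₁ with h₁ | h₁ <;> rcases h₂ with h₂ | h₂
  · exact hxa (hσ.eq_of_reflTransGen h₁ h₂)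
  · exact key hab h₁ h₂ hxa hxb
  · exact key hab.symm h₁ h₂ hxb hxa
  · exact hxb (hσ.eq_of_reflTransGen h₁ h₂)

lemma IsSepTree.exists_mandatoryArc (hsep : IsSepTree E) (hσ : IsLinExt E σ) {a b : Fin n}
    (hE : E a b ∨ E b a) (hab : a < b) : ∃ μ : Arc n, MandatoryArc E μ ∧ μ.a = a ∧ μ.b = b := by
  classical
  have hadj : (dirGraph E).Adj a b := hE.elim hσ.adj fun h => (hσ.adj h).symm
  refine ⟨⟨a, b, (Ioo a b).filter (fun x => ReflTransGen E x a ∨ ReflTransGen E x b),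
    (Ioo a b).filter (fun x => ReflTransGen E a x ∨ ReflTransGen E b x), hab, ?_, ?_⟩,
    ⟨hE, fun x hax hxb => by simp [hax, hxb]⟩, rfl, rfl⟩
  · refine disjoint_filter.2 fun x hx h₁ h₂ => ?_
    obtain ⟨hax, hxb⟩ := mem_Ioo.1 hx
    exact not_reflTransGen_and_reflTransGen hsep.1 hσ hadj hax.ne' hxb.ne h₁ h₂
  · rw [← filter_or]
    exact filter_true_of_mem fun x hx =>
      hsep.reflTransGen_or_of_between hσ hadj (.inl (mem_Ioo.1 hx))

end Edge

def downArc {n : ℕ} (M m : Fin n) (h : M < m) : Arc n :=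
  ⟨M, m, ∅, Ioo M m, h, disjoint_empty_left _, empty_union _⟩

def upArc {n : ℕ} (M m : Fin n) (h : M < m) : Arc n :=
  ⟨M, m, Ioo M m, ∅, h, disjoint_empty_right _, union_empty _⟩

section Admissible

variable {n : ℕ} {I : Set (Arc n)} {E F : Fin n → Fin n → Prop} {σ : Equiv.Perm (Fin n)}

lemma AdmissibleTree.downArc_mem (hI : IsArcIdeal I) (hE : AdmissibleTree I E)
    (hσ : IsLinExt E σ) {a b M m : Fin n} (hab : E a b ∨ E b a) (haM : a ≤ M) (hmb : m ≤ b)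
    (hMm : M < m) (hcover : ∀ x, M < x → x < m → ReflTransGen E a x ∨ ReflTransGen E b x) :
    downArc M m hMm ∈ I := by
  obtain ⟨μ, hμ, rfl, rfl⟩ := hE.1.exists_mandatoryArc hσ hab (by order)
  refine hI _ μ ⟨haM, hmb, empty_subset _, fun x hx => ?_⟩ (hE.2.1 μ hμ)
  obtain ⟨hMx, hxm⟩ := mem_Ioo.1 hx
  exact (hμ.2 x (by order) (by order)).2.2 (hcover x hMx hxm)

lemma AdmissibleTree.upArc_mem (hI : IsArcIdeal I) (hE : AdmissibleTree I E)
    (hσ : IsLinExt E σ) {a b M m : Fin n} (hab : E a b ∨ E b a) (haM : a ≤ M) (hmb : m ≤ b)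
    (hMm : M < m) (hcover : ∀ x, M < x → x < m → ReflTransGen E x a ∨ ReflTransGen E x b) :
    upArc M m hMm ∈ I := by
  obtain ⟨μ, hμ, rfl, rfl⟩ := hE.1.exists_mandatoryArc hσ hab (by order)
  refine hI _ μ ⟨haM, hmb, fun x hx => ?_, empty_subset _⟩ (hE.2.1 μ hμ)
  obtain ⟨hMx, hxm⟩ := mem_Ioo.1 hx
  exact (hμ.2 x (by order) (by order)).1.2 (hcover x hMx hxm)

/-- The forbidden down arc of `F` between the branches of `n₁` and `n₂` at `z` would be a subarc
of the mandatory arc of the `E`-edge `a — b`. -/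
lemma false_of_mandatory_covers_down (hI : IsArcIdeal I) (hE : AdmissibleTree I E)
    (hF : AdmissibleTree I F) (hσ : IsLinExt E σ) {a b z n₁ n₂ : Fin n} (hab : E a b ∨ E b a)
    (hlt : a < b) (h₁ : F n₁ z) (h₂ : F n₂ z) (hne : n₁ ≠ n₂) (ha : inSub F z n₁ a)
    (hb : inSub F z n₂ b) (hcover : ∀ x, a < x → x < b → ¬ inSub F z n₁ x → ¬ inSub F z n₂ x →
      ReflTransGen E a x ∨ ReflTransGen E b x) : False := by
  obtain ⟨M, m, haM, hmb, hMm, hM, hm⟩ :=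
    (hF.1.separatedAt_children h₁ h₂ hne).exists_gap ha hb hlt
  refine hF.2.2 (downArc M m hMm)
    (.inr ⟨rfl, z, n₁, n₂, h₁, h₂, hne, hM.1, fun x hx => hM.2 hx, hm.1, fun x hx => hm.2 hx⟩)
    (hE.downArc_mem hI hσ hab haM hmb hMm fun x hMx hxm => hcover x (by order) (by order)
      (fun hx => (hM.2 hx).not_gt hMx) (fun hx => (hm.2 hx).not_gt hxm))

lemma false_of_mandatory_covers_up (hI : IsArcIdeal I) (hE : AdmissibleTree I E)
    (hF : AdmissibleTree I F) (hσ : IsLinExt E σ) {a b z n₁ n₂ : Fin n} (hab : E a b ∨ E b a)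
    (hlt : a < b) (h₁ : F z n₁) (h₂ : F z n₂) (hne : n₁ ≠ n₂) (ha : inSub F z n₁ a)
    (hb : inSub F z n₂ b) (hcover : ∀ x, a < x → x < b → ¬ inSub F z n₁ x → ¬ inSub F z n₂ x →
      ReflTransGen E x a ∨ ReflTransGen E x b) : False := by
  obtain ⟨M, m, haM, hmb, hMm, hM, hm⟩ :=
    (hF.1.separatedAt_parents h₁ h₂ hne).exists_gap ha hb hlt
  refine hF.2.2 (upArc M m hMm)
    (.inl ⟨rfl, z, n₁, n₂, h₁, h₂, hne, hM.1, fun x hx => hM.2 hx, hm.1, fun x hx => hm.2 hx⟩)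
    (hE.upArc_mem hI hσ hab haM hmb hMm fun x hMx hxm => hcover x (by order) (by order)
      (fun hx => (hM.2 hx).not_gt hMx) (fun hx => (hm.2 hx).not_gt hxm))

end Admissible

section Between

variable {n : ℕ} {E : Fin n → Fin n → Prop} {σ : Equiv.Perm (Fin n)}

/-- Walking from `u` towards `z` through the child `w` of `z`, let `y₀` be the first vertex
below `z`: the vertex `x₀` just before it is a parent of `y₀` other than the next vertex `y₀'`. -/
lemma exists_transition (htree : (dirGraph E).IsTree) (hσ : IsLinExt E σ) {w z : Fin n}
    (hw : E w z) {u : Fin n} (P : (dirGraph E).Walk u z) (hP : P.IsPath)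
    (hu : IncompRel (ReflTransGen E) u z) (hwu : inSub E z w u) :
    ∃ x₀ y₀ y₀', E y₀ x₀ ∧ E y₀ y₀' ∧ x₀ ≠ y₀' ∧ ReflTransGen E y₀' z ∧ inSub E z w y₀ ∧
      inSub E y₀ x₀ u := by
  induction P with
  | nil => exact (hu.1 .refl).elim
  | @cons u v z h P' ih =>
    have hP' := hP.of_cons
    have hwv : inSub E z w v := by
      rw [inSub_iff_mem_support htree hP']
      rcases List.mem_cons.1 (hwu (.cons h P')) with rfl | hw'
      exacts [(hu.1 (.single hw)).elim, hw']
    by_cases hvz : ReflTransGen E v z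
    · have hvu : E v u := h.2.resolve_left fun huv => hu.1 (.head huv hvz)
      rcases hvz.cases_head with rfl | ⟨y', hvy', hy'z⟩
      · exact (hu.2 (.single hvu)).elim
      · exact ⟨u, v, y', hvu, hvy', fun h => hu.1 (h ▸ hy'z), hy'z, hwv, inSub_self E v u⟩
    have hzv : ¬ ReflTransGen E z v := fun hzv => hσ.not_reflTransGen hw (by
      by_contra hzw
      exact not_reachableAvoiding.2 hwv
        (reachableAvoiding_of_reflTransGen hzv fun h _ => hzw h).symm)
    obtain ⟨x₀, y₀, y₀', h₀, h₀', hne, hy', hy, hv⟩ := ih hw hP' ⟨hvz, hzv⟩ hwv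
    have hy₀z : ReflTransGen E y₀ z := .head h₀' hy'
    refine ⟨x₀, y₀, y₀', h₀, h₀', hne, hy', hy, inSub_of_inSub_of_reachableAvoiding htree
      (hσ.adj h₀).symm hv (reachableAvoiding_of_adj h ?_ ?_)⟩
    · rintro rfl
      exact hu.1 hy₀z
    · rintro rfl
      exact hvz hy₀z

/-- `t` reaches `z` without passing through `y`, which hangs below the child `w`, and `z` reaches
the parent `y'` of `y` along a chain. -/
lemma inSub_of_inSub_of_rel (htree : (dirGraph E).IsTree) (hσ : IsLinExt E σ)
    {z p w y y' t : Fin n} (hp : E z p) (ht : inSub E z p t) (hw : E w z) (hy : inSub E z w y)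
    (hyy' : E y y') (hy' : ReflTransGen E y' z) : inSub E y y' t := by
  have htz : ReachableAvoiding E y t z := by
    by_contra h
    rw [not_reachableAvoiding] at h
    have hpw := eq_of_inSub_of_inSub htree (hσ.adj hp).symm (hσ.adj hw) ht (inSub_trans h hy)
    exact hσ.not_reflTransGen hw (.single (hpw ▸ hp))
  exact inSub_of_reachableAvoiding htree (hσ.adj hyy').symm (htz.trans
    (reachableAvoiding_of_reflTransGen hy' fun hy'y _ => hσ.not_reflTransGen hyy' hy'y).symm)

lemma IsSepTree.reflTransGen_of_between_branches (hsep : IsSepTree E) (hσ : IsLinExt E σ)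
    {z n₁ n₂ a b x : Fin n} (h₁ : E z n₁) (h₂ : E z n₂) (hne : n₁ ≠ n₂) (ha : inSub E z n₁ a)
    (hb : inSub E z n₂ b) (hax : a < x) (hxb : x < b) (hx₁ : ¬ inSub E z n₁ x)
    (hx₂ : ¬ inSub E z n₂ x) : ReflTransGen E x z := by
  have htree := hsep.1
  have not_parent : ∀ p, E z p → ¬ inSub E z p x := fun p hp hx => by
    rcases hsep.eq_or_eq_of_rel h₁ h₂ hne hp with rfl | rfl <;> contradiction
  by_contra hxz
  by_cases hzx : ReflTransGen E z x
  · rcases hzx.cases_head with rfl | ⟨p, hzp, hpx⟩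
    · exact hxz .refl
    · exact not_parent p hzp (inSub_parent_of_reflTransGen htree hσ hzp hpx)
  obtain ⟨w, hwz, hw⟩ := exists_adj_inSub htree fun (h : x = z) => hxz (h ▸ .refl)
  have hw' : E w z := hwz.2.resolve_right fun hzw => not_parent w hzw hw
  obtain ⟨P, hP, -⟩ := htree.existsUnique_path x z
  obtain ⟨x₀, y₀, y₀', h₀, h₀', hne₀, hy', hy, hx⟩ :=
    exists_transition htree hσ hw' P hP ⟨hxz, hzx⟩ hw
  exact (hsep.separatedAt_parents h₀ h₀' hne₀).not_between hx
    (inSub_of_inSub_of_rel htree hσ h₁ ha hw' hy h₀' hy')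
    (inSub_of_inSub_of_rel htree hσ h₂ hb hw' hy h₀' hy') ⟨hax, hxb⟩

lemma IsSepTree.reflTransGen_of_between (hsep : IsSepTree E) (hσ : IsLinExt E σ) {c j x : Fin n}
    (hcj : E c j) (hx : c < x ∧ x < j ∨ j < x ∧ x < c) (hxj : ReflTransGen E x j) :
    ReflTransGen E x c := by
  rcases hxj.cases_tail with rfl | ⟨d, hxd, hdj⟩
  · rcases hx with hx | hx <;> order
  by_cases hdc : d = c
  · exact hdc ▸ hxd
  have := hsep.separatedAt_children hcj hdj (Ne.symm hdc) c x (inSub_self E j c)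
    (inSub_child_of_reflTransGen hsep.1 hσ hdj hxd)
  rcases hx with hx | hx <;> rcases this with h | h <;> order

end Between

def SameChildrenBefore {n : ℕ} (E F : Fin n → Fin n → Prop) (σ : Equiv.Perm (Fin n))
    (j : Fin n) : Prop :=
  ∀ v, σ.symm v < σ.symm j → ∀ u, E u v ↔ F u v

namespace SameChildrenBefore

variable {n : ℕ} {I : Set (Arc n)} {E F : Fin n → Fin n → Prop} {σ : Equiv.Perm (Fin n)}
  {c j : Fin n}

lemma symm (h : SameChildrenBefore E F σ j) : SameChildrenBefore F E σ j :=
  fun v hv u => (h v hv u).symm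

lemma reflTransGen (h : SameChildrenBefore E F σ j) (hσ : IsLinExt E σ) {x y : Fin n}
    (hxy : ReflTransGen E x y) (hy : σ.symm y < σ.symm j) : ReflTransGen F x y := by
  induction hxy with
  | refl => exact .refl
  | @tail b y _ hby ih => exact (ih ((hσ _ _ hby).trans hy)).tail ((h y hy b).1 hby)

lemma not_isPeak (h : SameChildrenBefore E F σ j) (hI : IsArcIdeal I) (hE : AdmissibleTree I E)
    (hF : AdmissibleTree I F) (hσE : IsLinExt E σ) (hσF : IsLinExt F σ) (hcj : E c j) (z : Fin n) :
    ¬ IsPeak F c j z := by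
  rintro ⟨hcz, n₁, n₂, h₁, h₂, hne, hc, hj⟩
  have hzc : ¬ ReflTransGen F z c := fun hzc => by
    obtain rfl := hσF.eq_of_reflTransGen hzc hcz
    exact hσF.ne h₁ (eq_of_inSub_self hc)
  have hcover : ∀ x, (c < x ∧ x < j ∨ j < x ∧ x < c) → ¬ inSub F z n₁ x →
      ReflTransGen E c x ∨ ReflTransGen E j x := by
    intro x hx hx₁
    -- `c` precedes `j`, so an `E`-chain from `x` to `c` is an `F`-chain into the branch of `c`
    have hxc : ¬ ReflTransGen E x c := fun hxc => hx₁ <|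
      inSub_of_inSub_of_reachableAvoiding hF.1.1 (hσF.adj h₁) hc <|
        reachableAvoiding_of_reflTransGen (h.reflTransGen hσE hxc (hσE _ _ hcj)) fun _ => hzc
    rcases hE.1.reflTransGen_or_of_between hσE (hσE.adj hcj) hx with (hxc' | hxj) | hup
    · exact absurd hxc' hxc
    · exact absurd (hE.1.reflTransGen_of_between hσE hcj hx hxj) hxc
    · exact hup
  rcases lt_or_gt_of_ne (hσE.ne hcj) with hlt | hlt
  · exact false_of_mandatory_covers_down hI hE hF hσE (.inl hcj) hlt h₁ h₂ hne hc hj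
      fun x hcx hxj hx₁ _ => hcover x (.inl ⟨hcx, hxj⟩) hx₁
  · exact false_of_mandatory_covers_down hI hE hF hσE (.inr hcj) hlt h₂ h₁ hne.symm hj hc
      fun x hjx hxc _ hx₁ => (hcover x (.inr ⟨hjx, hxc⟩) hx₁).symm

lemma not_isValley (h : SameChildrenBefore E F σ j) (hI : IsArcIdeal I) (hE : AdmissibleTree I E)
    (hF : AdmissibleTree I F) (hσE : IsLinExt E σ) (hσF : IsLinExt F σ) (hcj : E c j) (z : Fin n) :
    ¬ IsValley F c j z := by
  rintro ⟨hzc, n₁, n₂, h₁, h₂, hne, hc, hj⟩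
  have hbelow : ∀ {x}, ReflTransGen F x z → ReflTransGen E x c := fun hxz =>
    h.symm.reflTransGen hσF (hxz.trans hzc) (hσE _ _ hcj)
  rcases lt_or_gt_of_ne (hσE.ne hcj) with hlt | hlt
  · exact false_of_mandatory_covers_up hI hE hF hσE (.inl hcj) hlt h₁ h₂ hne hc hj
      fun x hcx hxj hx₁ hx₂ => .inl (hbelow
        (hF.1.reflTransGen_of_between_branches hσF h₁ h₂ hne hc hj hcx hxj hx₁ hx₂))
  · exact false_of_mandatory_covers_up hI hE hF hσE (.inr hcj) hlt h₂ h₁ hne.symm hj hc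
      fun x hjx hxc hx₂ hx₁ => .inr (hbelow
        (hF.1.reflTransGen_of_between_branches hσF h₂ h₁ hne.symm hj hc hjx hxc hx₂ hx₁))

lemma reflTransGen_of_rel (h : SameChildrenBefore E F σ j) (hI : IsArcIdeal I)
    (hE : AdmissibleTree I E) (hF : AdmissibleTree I F) (hσE : IsLinExt E σ)
    (hσF : IsLinExt F σ) (hcj : E c j) : ReflTransGen F c j := by
  rcases reflTransGen_or_isPeak_or_isValley hF.1.1 hσF (hσE.ne hcj) with
    hcj' | hjc | ⟨z, hz⟩ | ⟨z, hz⟩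
  · exact hcj'
  · exact absurd (hσF.le_of_reflTransGen hjc) (hσE _ _ hcj).not_ge
  · exact absurd hz (h.not_isPeak hI hE hF hσE hσF hcj z)
  · exact absurd hz (h.not_isValley hI hE hF hσE hσF hcj z)

lemma rel_of_rel (h : SameChildrenBefore E F σ j) (hI : IsArcIdeal I) (hE : AdmissibleTree I E)
    (hF : AdmissibleTree I F) (hσE : IsLinExt E σ) (hσF : IsLinExt F σ) (hcj : E c j) :
    F c j := by
  obtain ⟨c', hcc', hc'j⟩ := (h.reflTransGen_of_rel hI hE hF hσE hσF hcj).cases_tail.resolve_left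
    fun hjc => hσE.ne hcj hjc.symm
  obtain ⟨d, hc'd, hdj⟩ :=
    (h.symm.reflTransGen_of_rel hI hF hE hσF hσE hc'j).cases_tail.resolve_left
      fun hjc' => hσF.ne hc'j hjc'.symm
  have hcc'E : ReflTransGen E c c' := h.symm.reflTransGen hσF hcc' (hσF _ _ hc'j)
  obtain rfl := eq_of_rel_of_reflTransGen hE.1.1 hσE hcj hdj (hcc'E.trans hc'd)
  obtain rfl := hσE.eq_of_reflTransGen hcc'E hc'd
  exact hc'j

end SameChildrenBefore

theorem stmt6_general {n : ℕ} (I : Set (Arc n)) (hI : IsArcIdeal I)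
    (E E' : Fin n → Fin n → Prop)
    (hE : AdmissibleTree I E) (hE' : AdmissibleTree I E')
    (σ : Equiv.Perm (Fin n)) (h : IsLinExt E σ) (h' : IsLinExt E' σ) :
    E = E' := by
  have hchildren : ∀ j, SameChildrenBefore E E' σ j → ∀ u, E u j ↔ E' u j := fun j hj u =>
    ⟨hj.rel_of_rel hI hE hE' h h', hj.symm.rel_of_rel hI hE' hE h' h⟩
  have hall : ∀ j u, E u j ↔ E' u j := fun j =>
    (InvImage.wf (fun v => σ.symm v) wellFounded_lt).induction j fun j ih =>
      hchildren j fun v hv => ih v hv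
  funext u j
  exact propext (hall j u)

/-- two `≡`-admissible separating trees (for the same essential
congruence, given by its arc ideal `I`) having a common linear extension are equal. -/
theorem stmt6 {n : ℕ} (I : Set (Arc n)) (hI : IsArcIdeal I) (hess : EssentialIdeal I)
    (E E' : Fin n → Fin n → Prop)
    (hE : AdmissibleTree I E) (hE' : AdmissibleTree I E')
    (σ : Equiv.Perm (Fin n)) (h : IsLinExt E σ) (h' : IsLinExt E' σ) :
    E = E' :=
  stmt6_general I hI E E' hE hE' σ h h'
end
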